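/- arXiv:1906.08077 — 11 statements merged into one kernel-verified Lean document; each statement's English description precedes it below -/
import Mathlib

section
/- Let A, B, C : ℝ → ℝ be differentiable functions with A(0) = B(0) = C(0) = 0 such that (A(t+s), B(t+s), C(t+s)) = (A(t), B(t), C(t)) ⋆ (A(s), B(s), C(s)) for all t, s ∈ ℝ. Set a = A'(0), b = B'(0), c = C'(0) and suppose c ≠ 0. Then for all t ∈ ℝ: A(t) = (a/c)(1 − e^{−ct}), B(t) = (b/c)(e^{ct} − 1), and C(t) = ct. -/
/-! Each coordinate of a one-parameter subgroup satisfies a functional equation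
`f (t + s) = f t + k t * f s`. Differentiating in `s` at `0` gives the linear ODE
`f' t = k t * f' 0`: first `C' = c`, so `C t = c t`, and then `A'` and `B'` are explicit
exponentials, which integrate to the claimed formulas. -/

open Real

/-- The Sol₃ group operation on ℝ³. -/
noncomputable def sol3Mul (p q : ℝ × ℝ × ℝ) : ℝ × ℝ × ℝ :=
  (p.1 + Real.exp (-p.2.2) * q.1, p.2.1 + Real.exp p.2.2 * q.2.1, p.2.2 + q.2.2)

theorem hasDerivAt_of_map_add_eq_add_smul {𝕜 F : Type*} [NontriviallyNormedField 𝕜]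
    [NormedAddCommGroup F] [NormedSpace 𝕜 F] {f : 𝕜 → F} {k t : 𝕜} (hf : DifferentiableAt 𝕜 f 0)
    (h : ∀ s, f (t + s) = f t + k • f s) : HasDerivAt f (k • deriv f 0) t := by
  have hf' : HasDerivAt f (deriv f 0) (t - t) := by
    simpa using hf.hasDerivAt
  refine (((hf'.comp_sub_const t t).const_smul k).const_add (f t)).congr_of_eventuallyEq ?_
  exact Filter.Eventually.of_forall fun x => by simpa using h (x - t)

theorem eq_of_hasDerivAt_eq {𝕜 G : Type*} [RCLike 𝕜] [NormedAddCommGroup G] [NormedSpace 𝕜 G]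
    {f g f' : 𝕜 → G} (hf : ∀ x, HasDerivAt f (f' x) x) (hg : ∀ x, HasDerivAt g (f' x) x)
    (x : 𝕜) (hfgx : f x = g x) : f = g :=
  eq_of_fderiv_eq (fun y => (hf y).differentiableAt) (fun y => (hg y).differentiableAt)
    (fun y => by rw [(hf y).hasFDerivAt.fderiv, (hg y).hasFDerivAt.fderiv]) x hfgx

theorem hasDerivAt_div_mul_exp_mul_sub_one {a c : ℝ} (hc : c ≠ 0) (t : ℝ) :
    HasDerivAt (fun t => a / c * (exp (c * t) - 1)) (exp (c * t) * a) t := by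
  have hexp : HasDerivAt (fun t => exp (c * t)) (exp (c * t) * c) t := by
    simpa using ((hasDerivAt_id t).const_mul c).exp
  exact ((hexp.sub_const 1).const_mul (a / c)).congr_deriv (by field_simp)

theorem stmt1 (A B C : ℝ → ℝ)
    (hA : Differentiable ℝ A) (hB : Differentiable ℝ B) (hC : Differentiable ℝ C)
    (hA0 : A 0 = 0) (hB0 : B 0 = 0) (hC0 : C 0 = 0)
    (hgrp : ∀ t s : ℝ,
      ((A (t + s), B (t + s), C (t + s)) : ℝ × ℝ × ℝ) =
        sol3Mul (A t, B t, C t) (A s, B s, C s))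
    (a b c : ℝ) (ha : a = deriv A 0) (hb : b = deriv B 0) (hcd : c = deriv C 0)
    (hc : c ≠ 0) :
    ∀ t : ℝ,
      A t = a / c * (1 - Real.exp (-(c * t))) ∧
      B t = b / c * (Real.exp (c * t) - 1) ∧
      C t = c * t := by
  have hcomp (t s : ℝ) : A (t + s) = A t + exp (-C t) * A s ∧
      B (t + s) = B t + exp (C t) * B s ∧ C (t + s) = C t + C s := by
    simpa [sol3Mul] using hgrp t s
  have hCt : C = fun t => c * t := by
    refine eq_of_hasDerivAt_eq (f' := fun _ => c) (fun t => ?_)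
      (fun t => by simpa using (hasDerivAt_id t).const_mul c) 0 (by simp [hC0])
    simpa [hcd] using hasDerivAt_of_map_add_eq_add_smul (hC 0) (k := (1 : ℝ))
      (fun s => by simpa using (hcomp t s).2.2)
  -- the formula for `B` with `c` replaced by `-c`
  have hAt : A = fun t => a / -c * (exp (-c * t) - 1) := by
    refine eq_of_hasDerivAt_eq (fun t => ?_)
      (hasDerivAt_div_mul_exp_mul_sub_one (neg_ne_zero.2 hc)) 0 (by simp [hA0])
    simpa [ha, hCt] using hasDerivAt_of_map_add_eq_add_smul (hA 0)
      (fun s => by simpa [hCt] using (hcomp t s).1)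
  have hBt : B = fun t => b / c * (exp (c * t) - 1) := by
    refine eq_of_hasDerivAt_eq (fun t => ?_)
      (hasDerivAt_div_mul_exp_mul_sub_one hc) 0 (by simp [hB0])
    simpa [hb, hCt] using hasDerivAt_of_map_add_eq_add_smul (hB 0)
      (fun s => by simpa [hCt] using (hcomp t s).2.1)
  intro t
  refine ⟨?_, by rw [hBt], by rw [hCt]⟩
  rw [hAt]
  simp only [div_neg, neg_mul]
  ring
end

section
/- For any real λ, μ, θ₀, either f(θ₀) = 0 or there exist real numbers θ₁ < θ₀ < θ₂ such that f(θ₁) = f(θ₂) = 0 and f has no zero in the open interval (θ₁, θ₂) (hence f has a constant sign there); moreover θ₂ − θ₁ ≤ π if μ = 0, and θ₂ − θ₁ < 2π if μ ≠ 0. -/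
open Real

theorem stmt4 (lam μ θ₀ : ℝ) (f : ℝ → ℝ)
    (hf : ∀ θ : ℝ, f θ = μ * Real.cos θ - (θ - θ₀ + lam) * Real.sin θ) :
    f θ₀ = 0 ∨
    ∃ θ₁ θ₂ : ℝ, θ₁ < θ₀ ∧ θ₀ < θ₂ ∧ f θ₁ = 0 ∧ f θ₂ = 0 ∧
      (∀ θ ∈ Set.Ioo θ₁ θ₂, f θ ≠ 0) ∧
      (μ = 0 → θ₂ - θ₁ ≤ π) ∧
      (μ ≠ 0 → θ₂ - θ₁ < 2 * π) := by
  by_cases h0 : f θ₀ = 0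
  · exact Or.inl h0
  right
  have hπ := Real.pi_pos
  have hfc : Continuous f := by
    have hfe : f = fun θ => μ * Real.cos θ - (θ - θ₀ + lam) * Real.sin θ := funext hf
    rw [hfe]; continuity
  set Z : Set ℝ := {θ | f θ = 0} with hZ
  have hZc : IsClosed Z := isClosed_eq hfc continuous_const
  -- main construction: given zeros on both sides of θ₀, take closest ones
  have main : ∀ a b : ℝ, a ∈ Z → b ∈ Z → a ≤ θ₀ → θ₀ ≤ b →
      ∃ θ₁ θ₂ : ℝ, θ₁ < θ₀ ∧ θ₀ < θ₂ ∧ θ₁ ∈ Z ∧ θ₂ ∈ Z ∧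
        (∀ θ ∈ Set.Ioo θ₁ θ₂, f θ ≠ 0) ∧
        (∀ z ∈ Z, z ≤ θ₀ → z ≤ θ₁) ∧ (∀ z ∈ Z, θ₀ ≤ z → θ₂ ≤ z) := by
    intro a b ha hb hab hbb
    have hS₁c : IsClosed (Z ∩ Set.Iic θ₀) := hZc.inter isClosed_Iic
    have hS₂c : IsClosed (Z ∩ Set.Ici θ₀) := hZc.inter isClosed_Ici
    have hS₁ne : (Z ∩ Set.Iic θ₀).Nonempty := ⟨a, ha, hab⟩
    have hS₂ne : (Z ∩ Set.Ici θ₀).Nonempty := ⟨b, hb, hbb⟩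
    have hS₁bdd : BddAbove (Z ∩ Set.Iic θ₀) := ⟨θ₀, fun x hx => hx.2⟩
    have hS₂bdd : BddBelow (Z ∩ Set.Ici θ₀) := ⟨θ₀, fun x hx => hx.2⟩
    set θ₁ := sSup (Z ∩ Set.Iic θ₀) with hθ₁
    set θ₂ := sInf (Z ∩ Set.Ici θ₀) with hθ₂
    have h₁mem : θ₁ ∈ Z ∩ Set.Iic θ₀ := hS₁c.csSup_mem hS₁ne hS₁bdd
    have h₂mem : θ₂ ∈ Z ∩ Set.Ici θ₀ := hS₂c.csInf_mem hS₂ne hS₂bdd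
    have h₁lt : θ₁ < θ₀ := lt_of_le_of_ne h₁mem.2 (fun h => h0 (h ▸ h₁mem.1))
    have h₂gt : θ₀ < θ₂ := lt_of_le_of_ne h₂mem.2 (fun h => h0 (h ▸ h₂mem.1))
    refine ⟨θ₁, θ₂, h₁lt, h₂gt, h₁mem.1, h₂mem.1, ?_, ?_, ?_⟩
    · intro θ hθ hfθ
      rcases le_or_gt θ θ₀ with h | h
      · exact absurd (le_csSup hS₁bdd ⟨hfθ, h⟩) (not_le.2 hθ.1)
      · exact absurd (csInf_le hS₂bdd ⟨hfθ, h.le⟩) (not_le.2 hθ.2)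
    · exact fun z hz hle => le_csSup hS₁bdd ⟨hz, hle⟩
    · exact fun z hz hle => csInf_le hS₂bdd ⟨hz, hle⟩
  set m : ℤ := ⌊θ₀ / π⌋ with hm
  have hm1 : (m : ℝ) * π ≤ θ₀ := by
    have h := Int.floor_le (θ₀ / π)
    rw [← hm] at h
    calc (m : ℝ) * π ≤ (θ₀ / π) * π := by nlinarith
    _ = θ₀ := by field_simp
  have hm2 : θ₀ < ((m : ℝ) + 1) * π := by
    have h := Int.lt_floor_add_one (θ₀ / π)
    rw [← hm] at h
    calc θ₀ = (θ₀ / π) * π := by field_simp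
    _ < ((m : ℝ) + 1) * π := by nlinarith
  by_cases hμ : μ = 0
  · -- zeros at mπ and (m+1)π
    have hz1 : ((m : ℝ) * π) ∈ Z := by
      simp only [hZ, Set.mem_setOf_eq, hf, hμ, Real.sin_int_mul_pi, mul_zero, zero_mul, sub_zero]
    have hz2 : (((m : ℝ) + 1) * π) ∈ Z := by
      have he : ((m : ℝ) + 1) * π = ((m + 1 : ℤ) : ℝ) * π := by push_cast; ring
      simp only [hZ, Set.mem_setOf_eq, hf, hμ, he, Real.sin_int_mul_pi, mul_zero, zero_mul,
        sub_zero]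
    obtain ⟨θ₁, θ₂, h1, h2, hz₁, hz₂, hno, hub, hlb⟩ := main _ _ hz1 hz2 hm1 hm2.le
    have hb1 : (m : ℝ) * π ≤ θ₁ := hub _ hz1 hm1
    have hb2 : θ₂ ≤ ((m : ℝ) + 1) * π := hlb _ hz2 hm2.le
    exact ⟨θ₁, θ₂, h1, h2, hz₁, hz₂, hno, fun _ => by linarith, fun h => absurd hμ h⟩
  · -- IVT: f has a zero in each (kπ, (k+1)π)
    have key : ∀ k : ℤ, ∃ z ∈ Set.Ioo ((k : ℝ) * π) (((k : ℝ) + 1) * π), f z = 0 := by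
      intro k
      set a := (k : ℝ) * π with hadef
      set b := ((k : ℝ) + 1) * π with hbdef
      have hab : a ≤ b := by nlinarith
      have hsa : Real.sin a = 0 := Real.sin_int_mul_pi k
      have hca : Real.cos a ^ 2 = 1 := by
        have := Real.sin_sq_add_cos_sq a; rw [hsa] at this; linarith
      have hfa : f a = μ * Real.cos a := by rw [hf, hsa]; ring
      have hfb : f b = -(μ * Real.cos a) := by
        have hb' : b = a + π := by rw [hadef, hbdef]; ring
        have hsb : Real.sin b = 0 := by
          have he : b = ((k + 1 : ℤ) : ℝ) * π := by push_cast [hbdef]; ring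
          rw [he]; exact Real.sin_int_mul_pi (k + 1)
        rw [hf, hsb, hb', Real.cos_add_pi]; ring
      have hcne : μ * Real.cos a ≠ 0 := by
        intro h
        rcases mul_eq_zero.1 h with h | h
        · exact hμ h
        · rw [h] at hca; norm_num at hca
      have hcont : ContinuousOn f (Set.Icc a b) := hfc.continuousOn
      rcases lt_or_gt_of_ne hcne with hc | hc
      · have : (0 : ℝ) ∈ Set.Ioo (f a) (f b) := by rw [hfa, hfb]; constructor <;> linarith
        obtain ⟨z, hz, hz0⟩ := intermediate_value_Ioo hab hcont this
        exact ⟨z, hz, hz0⟩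
      · have : (0 : ℝ) ∈ Set.Ioo (f b) (f a) := by rw [hfa, hfb]; constructor <;> linarith
        obtain ⟨z, hz, hz0⟩ := intermediate_value_Ioo' hab hcont this
        exact ⟨z, hz, hz0⟩
    obtain ⟨z, hzmem, hz0⟩ := key (m - 1)
    obtain ⟨w, hwmem, hw0⟩ := key m
    obtain ⟨z', hz'mem, hz'0⟩ := key (m + 1)
    have hzb : ((m : ℝ) - 1) * π < z ∧ z < (m : ℝ) * π := by
      obtain ⟨h1, h2⟩ := hzmem; push_cast at h1 h2; constructor <;> linarith
    have hwb : (m : ℝ) * π < w ∧ w < ((m : ℝ) + 1) * π := hwmem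
    have hz'b : ((m : ℝ) + 1) * π < z' ∧ z' < ((m : ℝ) + 2) * π := by
      obtain ⟨h1, h2⟩ := hz'mem; push_cast at h1 h2; constructor <;> linarith
    have hzle : z ≤ θ₀ := by linarith [hzb.2]
    have hz'ge : θ₀ ≤ z' := by linarith [hz'b.1]
    obtain ⟨θ₁, θ₂, h1, h2, hmem₁, hmem₂, hno, hub, hlb⟩ := main z z' hz0 hz'0 hzle hz'ge
    refine ⟨θ₁, θ₂, h1, h2, hmem₁, hmem₂, hno, fun h => absurd h hμ, fun _ => ?_⟩
    have hwne : w ≠ θ₀ := fun h => h0 (h ▸ hw0)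
    rcases lt_or_gt_of_ne hwne with hw | hw
    · -- w < θ₀ : θ₁ ≥ w > mπ, θ₂ ≤ z' < (m+2)π
      have hb1 : w ≤ θ₁ := hub _ hw0 hw.le
      have hb2 : θ₂ ≤ z' := hlb _ hz'0 hz'ge
      have : θ₂ - θ₁ < ((m : ℝ) + 2) * π - (m : ℝ) * π := by
        have := hwb.1; have := hz'b.2; linarith
      linarith
    · -- w > θ₀ : θ₂ ≤ w < (m+1)π, θ₁ ≥ z > (m-1)π
      have hb1 : z ≤ θ₁ := hub _ hz0 hzle
      have hb2 : θ₂ ≤ w := hlb _ hw0 hw.le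
      have : θ₂ - θ₁ < ((m : ℝ) + 1) * π - ((m : ℝ) - 1) * π := by
        have := hzb.1; have := hwb.2; linarith
      linarith
end

section
/- There exists a unique function θ : ℝ → ℝ, defined on all of ℝ, with θ(0) = θ₀ and θ'(s) = f(θ(s)) for all s ∈ ℝ. This solution is bounded and monotone; more precisely: if f(θ₀) = 0 then θ is the constant function θ₀; if f(θ₀) > 0 then θ is strictly increasing; and if f(θ₀) < 0 then θ is strictly decreasing. -/
/-!
Since `f` is `C¹`, it is locally Lipschitz, so solutions of `θ' = f(θ)` are unique and a solution
that meets a zero of `f` is constant. As `f (n π) = μ cos (n π) = -f ((n + 1) π)`, `f` vanishes in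
every interval `[n π, (n + 1) π]`, so `θ₀` lies between two zeros `a ≤ θ₀ ≤ b`. No solution can
cross a zero, hence every solution stays in `[a, b]` and is bounded; existence follows from
Picard–Lindelöf for `f` clamped to `[a, b]`, which is globally Lipschitz and bounded. Finally
`f ∘ θ` never vanishes unless `θ` is constant, so `θ' = f ∘ θ` keeps the sign of `f θ₀`.
-/

open Real Set Filter Topology
open scoped NNReal

section VectorField

variable {E : Type*} [NormedAddCommGroup E] [NormedSpace ℝ E] {v : E → E}

theorem IsIntegralCurve.eq_of_locallyLipschitz (hv : LocallyLipschitz v) {γ₁ γ₂ : ℝ → E}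
    (h₁ : IsIntegralCurve γ₁ fun _ ↦ v) (h₂ : IsIntegralCurve γ₂ fun _ ↦ v) {t₀ : ℝ}
    (h : γ₁ t₀ = γ₂ t₀) : γ₁ = γ₂ := by
  have hopen : IsOpen {t | γ₁ t = γ₂ t} := by
    refine isOpen_iff_mem_nhds.2 fun t (ht : γ₁ t = γ₂ t) ↦ ?_
    obtain ⟨K, U, hU, hK⟩ := hv (γ₁ t)
    have hU₁ : ∀ᶠ s in 𝓝 t, γ₁ s ∈ U := h₁.continuous.continuousAt.preimage_mem_nhds hU
    have hU₂ : ∀ᶠ s in 𝓝 t, γ₂ s ∈ U := h₂.continuous.continuousAt.preimage_mem_nhds (ht ▸ hU)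
    exact ODE_solution_unique_of_eventually (v := fun _ ↦ v) (s := fun _ ↦ U)
      (.of_forall fun _ ↦ hK) (hU₁.mono fun s hs ↦ ⟨h₁ s, hs⟩) (hU₂.mono fun s hs ↦ ⟨h₂ s, hs⟩) ht
  have hclopen : IsClopen {t | γ₁ t = γ₂ t} := ⟨isClosed_eq h₁.continuous h₂.continuous, hopen⟩
  exact funext (eq_univ_iff_forall.1 (hclopen.eq_univ ⟨t₀, h⟩))

theorem IsIntegralCurve.eq_const_of_apply_eq (hv : LocallyLipschitz v) {γ : ℝ → E}
    (hγ : IsIntegralCurve γ fun _ ↦ v) {x : E} (hx : v x = 0) {t₀ : ℝ} (h : γ t₀ = x) :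
    γ = fun _ ↦ x :=
  hγ.eq_of_locallyLipschitz hv (isIntegralCurve_const fun _ ↦ hx) h

theorem IsIntegralCurve.apply_ne_zero (hv : LocallyLipschitz v) {γ : ℝ → E}
    (hγ : IsIntegralCurve γ fun _ ↦ v) {t₀ : ℝ} (h : v (γ t₀) ≠ 0) (t : ℝ) : v (γ t) ≠ 0 :=
  fun ht ↦ h (by rwa [hγ.eq_const_of_apply_eq hv ht rfl])

theorem exists_forall_mem_Ioo_hasDerivAt_of_lipschitzWith [CompleteSpace E] {K C : ℝ≥0}
    (hv : LipschitzWith K v) (hC : ∀ x, ‖v x‖ ≤ C) (x₀ : E) (T : ℝ≥0) :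
    ∃ γ : ℝ → E, γ 0 = x₀ ∧ ∀ t ∈ Ioo (-(T : ℝ)) T, HasDerivAt γ (v (γ t)) t := by
  have hpl : IsPicardLindelof (fun _ ↦ v) (tmin := -T) (tmax := T) ⟨0, by simp⟩ x₀ (C * T) 0 C K :=
    .of_time_independent (fun x _ ↦ hC x) hv.lipschitzOnWith (by simp)
  obtain ⟨γ, hγ0, hγ⟩ := hpl.exists_eq_forall_mem_Icc_hasDerivWithinAt₀
  exact ⟨γ, hγ0, fun t ht ↦ (hγ t (Ioo_subset_Icc_self ht)).hasDerivAt (Icc_mem_nhds ht.1 ht.2)⟩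

theorem exists_isIntegralCurve_of_lipschitzWith [CompleteSpace E] {K C : ℝ≥0}
    (hv : LipschitzWith K v) (hC : ∀ x, ‖v x‖ ≤ C) (x₀ : E) :
    ∃ γ : ℝ → E, γ 0 = x₀ ∧ IsIntegralCurve γ fun _ ↦ v := by
  choose α hα0 hα using exists_forall_mem_Ioo_hasDerivAt_of_lipschitzWith hv hC x₀
  have hagree {S T : ℝ≥0} (hS : 0 < S) (hST : S ≤ T) : EqOn (α S) (α T) (Ioo (-(S : ℝ)) S) :=
    ODE_solution_unique_of_mem_Ioo (v := fun _ ↦ v) (s := fun _ ↦ univ) (t₀ := 0)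
      (fun _ _ ↦ hv.lipschitzOnWith) ⟨by simpa, hS⟩
      (fun t ht ↦ ⟨hα S t ht, trivial⟩)
      (fun t ht ↦ ⟨hα T t (Ioo_subset_Ioo (by simpa) (by simpa) ht), trivial⟩)
      (by rw [hα0, hα0])
  have hmem (t : ℝ) : t ∈ Ioo (-((‖t‖₊ + 1 : ℝ≥0) : ℝ)) (‖t‖₊ + 1 : ℝ≥0) := abs_lt.1 (by simp)
  refine ⟨fun t ↦ α (‖t‖₊ + 1) t, hα0 _, fun t ↦ ?_⟩
  refine (hα _ t (hmem t)).congr_of_eventuallyEq ?_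
  filter_upwards [isOpen_Ioo.mem_nhds (hmem t)] with s hs
  rcases le_total (‖s‖₊ + 1) (‖t‖₊ + 1) with h | h
  · exact hagree (by positivity) h (hmem s)
  · exact (hagree (by positivity) h hs).symm

end VectorField

section OnReal

variable {f : ℝ → ℝ} {θ : ℝ → ℝ} {a b t₀ : ℝ}

theorem IsIntegralCurve.le_apply (hf : LocallyLipschitz f) (hθ : IsIntegralCurve θ fun _ ↦ f)
    (ha : f a = 0) (h : a ≤ θ t₀) (t : ℝ) : a ≤ θ t := by
  by_contra! ht
  obtain ⟨s, hs⟩ := intermediate_value_univ t t₀ hθ.continuous ⟨ht.le, h⟩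
  have := congrFun (hθ.eq_const_of_apply_eq hf ha hs) t
  linarith

theorem IsIntegralCurve.apply_le (hf : LocallyLipschitz f) (hθ : IsIntegralCurve θ fun _ ↦ f)
    (hb : f b = 0) (h : θ t₀ ≤ b) (t : ℝ) : θ t ≤ b := by
  by_contra! ht
  obtain ⟨s, hs⟩ := intermediate_value_univ t₀ t hθ.continuous ⟨h, ht.le⟩
  have := congrFun (hθ.eq_const_of_apply_eq hf hb hs) t
  linarith

theorem IsIntegralCurve.strictMono (hf : LocallyLipschitz f) (hθ : IsIntegralCurve θ fun _ ↦ f)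
    (h : 0 < f (θ t₀)) : StrictMono θ := by
  refine strictMono_of_hasDerivAt_pos hθ fun t ↦ ?_
  by_contra! ht
  obtain ⟨s, hs⟩ := intermediate_value_univ t t₀ (hf.continuous.comp hθ.continuous) ⟨ht, h.le⟩
  exact hθ.apply_ne_zero hf h.ne' s hs

theorem IsIntegralCurve.strictAnti (hf : LocallyLipschitz f) (hθ : IsIntegralCurve θ fun _ ↦ f)
    (h : f (θ t₀) < 0) : StrictAnti θ := by
  refine strictAnti_of_hasDerivAt_neg hθ fun t ↦ ?_
  by_contra! ht
  obtain ⟨s, hs⟩ := intermediate_value_univ t₀ t (hf.continuous.comp hθ.continuous) ⟨h.le, ht⟩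
  exact hθ.apply_ne_zero hf h.ne s hs

theorem exists_isIntegralCurve_of_apply_eq_zero (hf : LocallyLipschitz f) (ha : f a = 0)
    (hb : f b = 0) {x₀ : ℝ} (hx₀ : x₀ ∈ Icc a b) :
    ∃ θ : ℝ → ℝ, θ 0 = x₀ ∧ IsIntegralCurve θ fun _ ↦ f := by
  have hab : a ≤ b := hx₀.1.trans hx₀.2
  set F := IccExtend hab fun x : Icc a b ↦ f x
  have hFf : ∀ x ∈ Icc a b, F x = f x := fun x hx ↦ IccExtend_of_mem hab _ hx
  obtain ⟨K, hK⟩ := hf.locallyLipschitzOn.exists_lipschitzOnWith_of_compact isCompact_Icc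
  obtain ⟨C, hC⟩ := isCompact_Icc.exists_bound_of_continuousOn hf.continuous.continuousOn
  have hFlip : LipschitzWith (K * 1) F := hK.to_restrict.comp (LipschitzWith.projIcc hab)
  have hFC : ∀ x, ‖F x‖ ≤ C.toNNReal := fun x ↦ (hC _ (projIcc a b hab x).2).trans (le_max_left _ _)
  obtain ⟨θ, hθ0, hθ⟩ := exists_isIntegralCurve_of_lipschitzWith hFlip hFC x₀
  have hθmem (t : ℝ) : θ t ∈ Icc a b := by
    have hF := hFlip.locallyLipschitz
    exact ⟨hθ.le_apply hF ((hFf a ⟨le_rfl, hab⟩).trans ha) (hθ0 ▸ hx₀.1) t,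
      hθ.apply_le hF ((hFf b ⟨hab, le_rfl⟩).trans hb) (hθ0 ▸ hx₀.2) t⟩
  exact ⟨θ, hθ0, fun t ↦ (hθ t).congr_deriv (hFf _ (hθmem t))⟩

end OnReal

section MulCosSubMulSin

variable {μ : ℝ} {g h : ℝ → ℝ}

theorem exists_zero_mem_Icc_of_eq_mul_cos_sub_mul_sin (hg : Continuous g)
    (hgh : ∀ θ, g θ = μ * cos θ - h θ * sin θ) (n : ℤ) :
    ∃ z ∈ Icc (n * π) ((n + 1) * π), g z = 0 := by
  have hle : (n : ℝ) * π ≤ (n + 1) * π := by gcongr; linarith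
  have h₀ : g (n * π) = μ * cos (n * π) := by simp [hgh, sin_int_mul_pi]
  have h₁ : g ((n + 1) * π) = -(μ * cos (n * π)) := by
    rw [hgh, add_mul, one_mul, sin_add_pi, cos_add_pi, sin_int_mul_pi]; ring
  have hsign : (0 : ℝ) ∈ uIcc (g (n * π)) (g ((n + 1) * π)) := by
    rw [h₀, h₁, mem_uIcc]
    rcases le_total 0 (μ * cos (n * π)) with hμ | hμ
    · exact Or.inr ⟨neg_nonpos.2 hμ, hμ⟩
    · exact Or.inl ⟨hμ, neg_nonneg.2 hμ⟩
  obtain ⟨z, hz, hgz⟩ := intermediate_value_uIcc hg.continuousOn hsign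
  exact ⟨z, uIcc_of_le hle ▸ hz, hgz⟩

theorem exists_zero_le_of_eq_mul_cos_sub_mul_sin (hg : Continuous g)
    (hgh : ∀ θ, g θ = μ * cos θ - h θ * sin θ) (x : ℝ) : ∃ a ≤ x, g a = 0 := by
  obtain ⟨a, ha, hga⟩ := exists_zero_mem_Icc_of_eq_mul_cos_sub_mul_sin hg hgh (⌊x / π⌋ - 1)
  refine ⟨a, ha.2.trans ?_, hga⟩
  push_cast
  rw [sub_add_cancel, ← le_div_iff₀ pi_pos]
  exact Int.floor_le _

theorem exists_zero_ge_of_eq_mul_cos_sub_mul_sin (hg : Continuous g)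
    (hgh : ∀ θ, g θ = μ * cos θ - h θ * sin θ) (x : ℝ) : ∃ b ≥ x, g b = 0 := by
  obtain ⟨b, hb, hgb⟩ := exists_zero_mem_Icc_of_eq_mul_cos_sub_mul_sin hg hgh ⌈x / π⌉
  exact ⟨b, ((div_le_iff₀ pi_pos).1 (Int.le_ceil _)).trans hb.1, hgb⟩

end MulCosSubMulSin

theorem stmt5 (lam μ θ₀ : ℝ) (f : ℝ → ℝ)
    (hf : ∀ θ : ℝ, f θ = μ * Real.cos θ - (θ - θ₀ + lam) * Real.sin θ) :
    (∃! θ : ℝ → ℝ, θ 0 = θ₀ ∧ ∀ s : ℝ, HasDerivAt θ (f (θ s)) s) ∧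
    (∀ θ : ℝ → ℝ, (θ 0 = θ₀ ∧ ∀ s : ℝ, HasDerivAt θ (f (θ s)) s) →
      (∃ M : ℝ, ∀ s : ℝ, |θ s| ≤ M) ∧
      (f θ₀ = 0 → ∀ s : ℝ, θ s = θ₀) ∧
      (0 < f θ₀ → StrictMono θ) ∧
      (f θ₀ < 0 → StrictAnti θ)) := by
  have hlip : LocallyLipschitz f := by
    rw [funext hf]
    exact ContDiff.locallyLipschitz (𝕂 := ℝ) (by fun_prop)
  obtain ⟨a, ha, hfa⟩ := exists_zero_le_of_eq_mul_cos_sub_mul_sin hlip.continuous hf θ₀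
  obtain ⟨b, hb, hfb⟩ := exists_zero_ge_of_eq_mul_cos_sub_mul_sin hlip.continuous hf θ₀
  obtain ⟨θ, hθ0, hθ⟩ := exists_isIntegralCurve_of_apply_eq_zero hlip hfa hfb ⟨ha, hb⟩
  refine ⟨⟨θ, ⟨hθ0, hθ⟩, fun η ⟨hη0, hη⟩ ↦
    IsIntegralCurve.eq_of_locallyLipschitz hlip hη hθ (t₀ := 0) (hη0.trans hθ0.symm)⟩, ?_⟩
  rintro η ⟨hη0, hη : IsIntegralCurve η fun _ ↦ f⟩
  refine ⟨⟨max |a| |b|, fun s ↦ abs_le_max_abs_abs (hη.le_apply hlip hfa (hη0 ▸ ha) s)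
      (hη.apply_le hlip hfb (hη0 ▸ hb) s)⟩,
    fun h ↦ congrFun (hη.eq_const_of_apply_eq hlip h hη0),
    fun h ↦ hη.strictMono hlip (t₀ := 0) (hη0 ▸ h),
    fun h ↦ hη.strictAnti hlip (t₀ := 0) (hη0 ▸ h)⟩
end

section
/- Let θ : ℝ → ℝ satisfy θ(0) = θ₀ and θ'(s) = f(θ(s)) for all s ∈ ℝ, and suppose f(θ₀) ≠ 0. Then there exist θ₁ < θ₀ < θ₂ with f(θ₁) = f(θ₂) = 0 and f of constant sign on (θ₁, θ₂), such that: if f(θ₀) > 0 then θ(s) → θ₂ as s → +∞ and θ(s) → θ₁ as s → −∞; if f(θ₀) < 0 then θ(s) → θ₁ as s → +∞ and θ(s) → θ₂ as s → −∞. In particular the limits of θ at ±∞ exist, are finite, and are zeros of f. -/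
/-!
Equilibria of the scalar equation `θ' = f θ` cannot be reached in finite time (uniqueness for
locally Lipschitz `f`), so a solution starting between two consecutive zeros `θ₁ < θ₀ < θ₂` of `f`
stays between them. There `f` has one sign, so the solution is monotone and bounded; its limits at
`±∞` are zeros of `f` (by the mean value theorem on `[t, t + 1]`), hence the endpoints. Zeros of
`f x = μ cos x - (x - c) sin x` (here `c = θ₀ - λ`) exist beyond any bound in both directions,
because `f (2kπ ∓ π/2) = ±(2kπ ∓ π/2 - c)` changes sign on `[2kπ - π/2, 2kπ + π/2]` unless `c`
lies inside that interval.
-/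

open Real Filter Topology Set

theorem eq_const_of_hasDerivAt_of_apply_eq_zero {E : Type*} [NormedAddCommGroup E]
    [NormedSpace ℝ E] {f : E → E} (hf : LocallyLipschitz f) {c : E} (hc : f c = 0)
    {θ : ℝ → E} (hθ : ∀ s, HasDerivAt θ (f (θ s)) s) {s₀ : ℝ} (hs₀ : θ s₀ = c) :
    θ = fun _ => c := by
  have hcont : Continuous θ := continuous_iff_continuousAt.2 fun s => (hθ s).continuousAt
  have hopen : IsOpen {s | θ s = c} := by
    refine isOpen_iff_mem_nhds.2 fun s₁ (hs₁ : θ s₁ = c) => ?_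
    obtain ⟨K, t, ht, hK⟩ := hf c
    have hθt : ∀ᶠ s in 𝓝 s₁, θ s ∈ t := hcont.continuousAt.preimage_mem_nhds (hs₁ ▸ ht)
    refine ODE_solution_unique_of_eventually (v := fun _ => f) (s := fun _ => t)
      (.of_forall fun _ => hK) (hθt.mono fun s hs => ⟨hθ s, hs⟩)
      (.of_forall fun s => ⟨by simpa [hc] using hasDerivAt_const s c, mem_of_mem_nhds ht⟩) hs₁
  have huniv := IsClopen.eq_univ ⟨isClosed_eq hcont continuous_const, hopen⟩ ⟨s₀, hs₀⟩
  exact funext fun s => (huniv ▸ mem_univ s : s ∈ {s | θ s = c})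

section Autonomous

variable {f θ : ℝ → ℝ}

theorem hasDerivAt_comp_neg_of_hasDerivAt (hθ : ∀ s, HasDerivAt θ (f (θ s)) s) (s : ℝ) :
    HasDerivAt (fun s => θ (-s)) ((-f) (θ (-s))) s := by
  simpa [Function.comp_def] using (hθ (-s)).comp s (hasDerivAt_neg s)

theorem apply_eq_zero_of_tendsto_atTop (hf : Continuous f) (hθ : ∀ s, HasDerivAt θ (f (θ s)) s)
    {L : ℝ} (hL : Tendsto θ atTop (𝓝 L)) : f L = 0 := by
  choose ξ hξ hslope using fun t : ℝ => exists_hasDerivAt_eq_slope θ (fun s => f (θ s))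
    (lt_add_one t) (fun s _ => (hθ s).continuousAt.continuousWithinAt) (fun s _ => hθ s)
  have hξ : Tendsto ξ atTop atTop := tendsto_atTop_mono (fun t => (hξ t).1.le) tendsto_id
  have hlim : Tendsto (fun t => f (θ (ξ t))) atTop (𝓝 (f L)) :=
    (hf.tendsto L).comp (hL.comp hξ)
  have hzero : Tendsto (fun t => f (θ (ξ t))) atTop (𝓝 (L - L)) := by
    simp only [hslope, add_sub_cancel_left, div_one]
    exact (hL.comp (tendsto_atTop_add_const_right _ 1 tendsto_id)).sub hL
  simpa using tendsto_nhds_unique hlim hzero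

theorem apply_eq_zero_of_tendsto_atBot (hf : Continuous f) (hθ : ∀ s, HasDerivAt θ (f (θ s)) s)
    {L : ℝ} (hL : Tendsto θ atBot (𝓝 L)) : f L = 0 :=
  neg_eq_zero.1 <| apply_eq_zero_of_tendsto_atTop hf.neg (hasDerivAt_comp_neg_of_hasDerivAt hθ)
    (hL.comp tendsto_neg_atTop_atBot)

theorem mem_Ioo_of_hasDerivAt (hf : LocallyLipschitz f) {a b : ℝ} (ha : f a = 0) (hb : f b = 0)
    (hθ : ∀ s, HasDerivAt θ (f (θ s)) s) (h₀ : θ 0 ∈ Ioo a b) (s : ℝ) : θ s ∈ Ioo a b := by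
  have hrange := isPreconnected_range
    (continuous_iff_continuousAt.2 fun s => (hθ s).continuousAt)
  have hmiss : ∀ {c}, f c = 0 → θ 0 ≠ c → c ∉ range θ := fun hc h₀c ⟨t, ht⟩ =>
    h₀c (congrFun (eq_const_of_hasDerivAt_of_apply_eq_zero hf hc hθ ht) 0)
  constructor
  · by_contra! h
    exact hmiss ha h₀.1.ne' (hrange.Icc_subset (mem_range_self s) (mem_range_self 0) ⟨h, h₀.1.le⟩)
  · by_contra! h
    exact hmiss hb h₀.2.ne (hrange.Icc_subset (mem_range_self 0) (mem_range_self s) ⟨h₀.2.le, h⟩)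

theorem tendsto_of_pos_on_Ioo (hf : LocallyLipschitz f) {a b : ℝ} (ha : f a = 0) (hb : f b = 0)
    (hpos : ∀ x ∈ Ioo a b, 0 < f x) (hθ : ∀ s, HasDerivAt θ (f (θ s)) s) (h₀ : θ 0 ∈ Ioo a b) :
    Tendsto θ atTop (𝓝 b) ∧ Tendsto θ atBot (𝓝 a) := by
  have hmem := mem_Ioo_of_hasDerivAt hf ha hb hθ h₀
  have hmono : Monotone θ :=
    (strictMono_of_hasDerivAt_pos hθ fun s => hpos _ (hmem s)).monotone
  constructor
  · have hbdd : BddAbove (range θ) := ⟨b, forall_mem_range.2 fun s => (hmem s).2.le⟩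
    have hL := tendsto_atTop_ciSup hmono hbdd
    have hzero := apply_eq_zero_of_tendsto_atTop hf.continuous hθ hL
    have hgt : a < ⨆ s, θ s := (hmem 0).1.trans_le (le_ciSup hbdd 0)
    have hle : ⨆ s, θ s ≤ b := ciSup_le fun s => (hmem s).2.le
    rwa [le_antisymm hle (not_lt.1 fun h => (hpos _ ⟨hgt, h⟩).ne' hzero)] at hL
  · have hbdd : BddBelow (range θ) := ⟨a, forall_mem_range.2 fun s => (hmem s).1.le⟩
    have hL := tendsto_atBot_ciInf hmono hbdd
    have hzero := apply_eq_zero_of_tendsto_atBot hf.continuous hθ hL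
    have hlt : ⨅ s, θ s < b := (ciInf_le hbdd 0).trans_lt (hmem 0).2
    have hge : a ≤ ⨅ s, θ s := le_ciInf fun s => (hmem s).1.le
    rwa [← le_antisymm hge (not_lt.1 fun h => (hpos _ ⟨h, hlt⟩).ne' hzero)] at hL

theorem tendsto_of_neg_on_Ioo (hf : LocallyLipschitz f) {a b : ℝ} (ha : f a = 0) (hb : f b = 0)
    (hneg : ∀ x ∈ Ioo a b, f x < 0) (hθ : ∀ s, HasDerivAt θ (f (θ s)) s) (h₀ : θ 0 ∈ Ioo a b) :
    Tendsto θ atTop (𝓝 a) ∧ Tendsto θ atBot (𝓝 b) := by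
  obtain ⟨hbot, htop⟩ := tendsto_of_pos_on_Ioo hf.neg (by simp [ha]) (by simp [hb])
    (fun x hx => neg_pos.2 (hneg x hx)) (hasDerivAt_comp_neg_of_hasDerivAt hθ) (by simpa using h₀)
  exact ⟨by simpa [Function.comp_def] using htop.comp tendsto_neg_atTop_atBot,
    by simpa [Function.comp_def] using hbot.comp tendsto_neg_atBot_atTop⟩

end Autonomous

theorem IsPreconnected.forall_pos_of_ne_zero {s : Set ℝ} (hs : IsPreconnected s) {f : ℝ → ℝ}
    (hf : ContinuousOn f s) (hne : ∀ x ∈ s, f x ≠ 0) {x₀ : ℝ} (hx₀ : x₀ ∈ s) (hpos : 0 < f x₀) :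
    ∀ x ∈ s, 0 < f x := fun x hx => by
  by_contra! hle
  obtain ⟨z, hz, hz0⟩ := hs.intermediate_value hx hx₀ hf ⟨hle, hpos.le⟩
  exact hne z hz hz0

theorem IsPreconnected.forall_neg_of_ne_zero {s : Set ℝ} (hs : IsPreconnected s) {f : ℝ → ℝ}
    (hf : ContinuousOn f s) (hne : ∀ x ∈ s, f x ≠ 0) {x₀ : ℝ} (hx₀ : x₀ ∈ s) (hneg : f x₀ < 0) :
    ∀ x ∈ s, f x < 0 := fun x hx =>
  neg_pos.1 <| hs.forall_pos_of_ne_zero hf.neg (fun y hy => neg_ne_zero.2 (hne y hy)) hx₀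
    (neg_pos.2 hneg) x hx

theorem exists_adjacent_zeros {f : ℝ → ℝ} (hf : Continuous f) {x₀ : ℝ} (hx₀ : f x₀ ≠ 0)
    (hgt : ∃ z, x₀ < z ∧ f z = 0) (hlt : ∃ z, z < x₀ ∧ f z = 0) :
    ∃ a b, a < x₀ ∧ x₀ < b ∧ f a = 0 ∧ f b = 0 ∧ ∀ x ∈ Ioo a b, f x ≠ 0 := by
  obtain ⟨z₂, hz₂, hfz₂⟩ := hgt
  obtain ⟨z₁, hz₁, hfz₁⟩ := hlt
  have hzeros : IsClosed (f ⁻¹' {0}) := isClosed_singleton.preimage hf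
  obtain ⟨⟨hb, hfb⟩, hleast⟩ := (isClosed_Ici.inter hzeros).isLeast_csInf
    ⟨z₂, hz₂.le, hfz₂⟩ ⟨x₀, fun _ hx => hx.1⟩
  obtain ⟨⟨ha, hfa⟩, hgreatest⟩ := (isClosed_Iic.inter hzeros).isGreatest_csSup
    ⟨z₁, hz₁.le, hfz₁⟩ ⟨x₀, fun _ hx => hx.1⟩
  refine ⟨_, _, ha.lt_of_ne fun h => hx₀ (h ▸ hfa), hb.lt_of_ne fun h => hx₀ (h ▸ hfb),
    hfa, hfb, fun x hx hfx => ?_⟩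
  rcases le_total x₀ x with h | h
  · exact hx.2.not_ge (hleast ⟨h, hfx⟩)
  · exact hx.1.not_ge (hgreatest ⟨h, hfx⟩)

section ZerosOfRHS

variable {μ c : ℝ} {f : ℝ → ℝ} (hf : ∀ x, f x = μ * cos x - (x - c) * sin x)
include hf

theorem exists_mem_Icc_apply_eq_zero (k : ℤ)
    (hc : c ∉ Ioo (-(π / 2) + k * (2 * π)) (π / 2 + k * (2 * π))) :
    ∃ z ∈ Icc (-(π / 2) + k * (2 * π)) (π / 2 + k * (2 * π)), f z = 0 := by
  have hcont : Continuous f := by rw [funext hf]; fun_prop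
  have hle : -(π / 2) + k * (2 * π) ≤ π / 2 + k * (2 * π) := by linarith [pi_pos]
  have hleft : f (-(π / 2) + k * (2 * π)) = -(π / 2) + k * (2 * π) - c := by
    simp [hf, cos_add_int_mul_two_pi, sin_add_int_mul_two_pi]
  have hright : f (π / 2 + k * (2 * π)) = -(π / 2 + k * (2 * π) - c) := by
    simp [hf, cos_add_int_mul_two_pi, sin_add_int_mul_two_pi]
  have h0 : (0 : ℝ) ∈ uIcc (f (-(π / 2) + k * (2 * π))) (f (π / 2 + k * (2 * π))) := by
    rw [hleft, hright, mem_uIcc]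
    rw [mem_Ioo, not_and_or, not_lt, not_lt] at hc
    rcases hc with hc | hc
    · exact Or.inr ⟨by linarith, by linarith⟩
    · exact Or.inl ⟨by linarith, by linarith⟩
  obtain ⟨z, hz, hz0⟩ := intermediate_value_uIcc hcont.continuousOn h0
  exact ⟨z, uIcc_of_le hle ▸ hz, hz0⟩

theorem exists_gt_apply_eq_zero (b : ℝ) : ∃ z, b < z ∧ f z = 0 := by
  obtain ⟨k, hk⟩ := exists_int_gt ((max b c + π / 2) / (2 * π))
  have hk' : max b c < -(π / 2) + k * (2 * π) := by
    rw [div_lt_iff₀ (by positivity)] at hk; linarith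
  obtain ⟨z, hz, hz0⟩ :=
    exists_mem_Icc_apply_eq_zero hf k fun h => (le_max_right b c).not_gt (hk'.trans h.1)
  exact ⟨z, ((le_max_left b c).trans_lt hk').trans_le hz.1, hz0⟩

theorem exists_lt_apply_eq_zero (b : ℝ) : ∃ z, z < b ∧ f z = 0 := by
  obtain ⟨k, hk⟩ := exists_int_lt ((min b c - π / 2) / (2 * π))
  have hk' : π / 2 + k * (2 * π) < min b c := by
    rw [lt_div_iff₀ (by positivity)] at hk; linarith
  obtain ⟨z, hz, hz0⟩ :=
    exists_mem_Icc_apply_eq_zero hf k fun h => (min_le_right b c).not_gt (h.2.trans hk')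
  exact ⟨z, hz.2.trans_lt (hk'.trans_le (min_le_left b c)), hz0⟩

end ZerosOfRHS

theorem stmt6 (lam μ θ₀ : ℝ) (f : ℝ → ℝ)
    (hf : ∀ θ : ℝ, f θ = μ * Real.cos θ - (θ - θ₀ + lam) * Real.sin θ)
    (θ : ℝ → ℝ) (hθ0 : θ 0 = θ₀) (hθ : ∀ s : ℝ, HasDerivAt θ (f (θ s)) s)
    (hne : f θ₀ ≠ 0) :
    ∃ θ₁ θ₂ : ℝ, θ₁ < θ₀ ∧ θ₀ < θ₂ ∧ f θ₁ = 0 ∧ f θ₂ = 0 ∧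
      ((∀ x ∈ Set.Ioo θ₁ θ₂, 0 < f x) ∨ (∀ x ∈ Set.Ioo θ₁ θ₂, f x < 0)) ∧
      (0 < f θ₀ →
        Tendsto θ atTop (𝓝 θ₂) ∧ Tendsto θ atBot (𝓝 θ₁)) ∧
      (f θ₀ < 0 →
        Tendsto θ atTop (𝓝 θ₁) ∧ Tendsto θ atBot (𝓝 θ₂)) := by
  have hf' : ∀ x, f x = μ * cos x - (x - (θ₀ - lam)) * sin x := fun x => by rw [hf]; ring
  have hsmooth : ContDiff ℝ 1 f := by rw [funext hf']; fun_prop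
  obtain ⟨θ₁, θ₂, h₁, h₂, hf₁, hf₂, hnz⟩ := exists_adjacent_zeros hsmooth.continuous hne
    (exists_gt_apply_eq_zero hf' θ₀) (exists_lt_apply_eq_zero hf' θ₀)
  have hmem : θ₀ ∈ Ioo θ₁ θ₂ := ⟨h₁, h₂⟩
  have hpos : 0 < f θ₀ → ∀ x ∈ Ioo θ₁ θ₂, 0 < f x :=
    isPreconnected_Ioo.forall_pos_of_ne_zero hsmooth.continuous.continuousOn hnz hmem
  have hneg : f θ₀ < 0 → ∀ x ∈ Ioo θ₁ θ₂, f x < 0 :=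
    isPreconnected_Ioo.forall_neg_of_ne_zero hsmooth.continuous.continuousOn hnz hmem
  refine ⟨θ₁, θ₂, h₁, h₂, hf₁, hf₂, hne.lt_or_gt.symm.imp hpos hneg, fun h => ?_, fun h => ?_⟩
  · exact tendsto_of_pos_on_Ioo hsmooth.locallyLipschitz hf₁ hf₂ (hpos h) hθ (hθ0 ▸ hmem)
  · exact tendsto_of_neg_on_Ioo hsmooth.locallyLipschitz hf₁ hf₂ (hneg h) hθ (hθ0 ▸ hmem)
end

section
/- Let (y, z, θ) solve the translator system. Then for every s ∈ ℝ one has the conservation law θ(s) − θ₀ + λ = e^{−z(s)}·(λ + μ·y(s)); consequently θ satisfies the autonomous equation θ'(s) = f(θ(s)) for all s, where f(θ) = μ·cos θ − (θ − θ₀ + λ)·sin θ. -/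
/-! Since `(e^{-z})' = -e^{-z} sin θ` and `e^{-z} e^{z} = 1`, the function `θ - e^{-z}(λ + μ y)`
has derivative zero along the system, so it stays equal to its initial value `θ₀ - λ`.
Substituting `e^{-z}(λ + μ y) = θ - θ₀ + λ` into the equation for `θ'` makes it autonomous. -/

open Real Filter Topology

section TranslatorSystem

variable {lam μ : ℝ} {y z θ : ℝ → ℝ}

theorem translator_firstIntegral_hasDerivAt_zero {s : ℝ}
    (hy : HasDerivAt y (exp (z s) * cos (θ s)) s)
    (hz : HasDerivAt z (sin (θ s)) s)
    (hθ : HasDerivAt θ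
      (-lam * exp (-z s) * sin (θ s) + μ * (cos (θ s) - y s * exp (-z s) * sin (θ s))) s) :
    HasDerivAt (fun s => θ s - exp (-z s) * (lam + μ * y s)) 0 s := by
  have hexp : HasDerivAt (fun s => exp (-z s)) (exp (-z s) * -sin (θ s)) s := hz.neg.exp
  refine (hθ.sub (hexp.mul ((hy.const_mul μ).const_add lam))).congr_deriv ?_
  have hinv : exp (-z s) * exp (z s) = 1 := by rw [← exp_add, neg_add_cancel, exp_zero]
  linear_combination (-μ * cos (θ s)) * hinv

theorem translator_firstIntegral_eq
    (hy : ∀ s, HasDerivAt y (exp (z s) * cos (θ s)) s)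
    (hz : ∀ s, HasDerivAt z (sin (θ s)) s)
    (hθ : ∀ s, HasDerivAt θ
      (-lam * exp (-z s) * sin (θ s) + μ * (cos (θ s) - y s * exp (-z s) * sin (θ s))) s)
    (s t : ℝ) :
    θ s - exp (-z s) * (lam + μ * y s) = θ t - exp (-z t) * (lam + μ * y t) := by
  have hderiv s := translator_firstIntegral_hasDerivAt_zero (hy s) (hz s) (hθ s)
  exact is_const_of_deriv_eq_zero (fun s => (hderiv s).differentiableAt)
    (fun s => (hderiv s).deriv) s t

end TranslatorSystem

theorem stmt7
    (lam μ θ₀ : ℝ) (y z θ : ℝ → ℝ)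
    (hy0 : y 0 = 0) (hz0 : z 0 = 0) (hθ0 : θ 0 = θ₀)
    (hy : ∀ s : ℝ, HasDerivAt y (Real.exp (z s) * Real.cos (θ s)) s)
    (hz : ∀ s : ℝ, HasDerivAt z (Real.sin (θ s)) s)
    (hθ : ∀ s : ℝ, HasDerivAt θ
      (-lam * Real.exp (-z s) * Real.sin (θ s) +
        μ * (Real.cos (θ s) - y s * Real.exp (-z s) * Real.sin (θ s))) s) :
    (∀ s : ℝ, θ s - θ₀ + lam = Real.exp (-z s) * (lam + μ * y s)) ∧
    (∀ s : ℝ, HasDerivAt θ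
      (μ * Real.cos (θ s) - (θ s - θ₀ + lam) * Real.sin (θ s)) s) := by
  have hcons (s : ℝ) : θ s - θ₀ + lam = exp (-z s) * (lam + μ * y s) := by
    have h := translator_firstIntegral_eq hy hz hθ s 0
    rw [hy0, hz0, hθ0, neg_zero, exp_zero] at h
    linarith
  refine ⟨hcons, fun s => (hθ s).congr_deriv ?_⟩
  linear_combination sin (θ s) * hcons s
end

section
/- Let (y, z, θ) solve the translator system with μ = 0 and f(θ₀) ≠ 0, where f(θ) = −(θ − θ₀ + λ)·sin θ. Then sin θ(s) ≠ 0 for every s ∈ ℝ (so z is strictly monotone on ℝ), and the set { s ∈ ℝ : cos θ(s) = 0 } contains at most one element (so y has at most one critical point). -/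
/-!
With `μ = 0` the equation for `θ` gives `(sin θ)' = (-λ e^{-z} cos θ) · sin θ`, a linear equation,
so `sin θ` is `sin θ₀` times a positive integrating factor and never vanishes. Hence `z' = sin θ`
and `θ' = -λ e^{-z} sin θ` never vanish, and by Darboux `z` and `θ` are strictly monotone.
Between two distinct zeros of `cos` lies a multiple of `π`, which the continuous `θ` would have
to hit; so `θ` takes one value on `{cos θ = 0}`, and injectivity of `θ` does the rest.
-/

open Real Set

theorem eq_mul_exp_integral_of_hasDerivAt {u c : ℝ → ℝ} (hc : Continuous c)
    (hu : ∀ s, HasDerivAt u (c s * u s) s) (a s : ℝ) :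
    u s = u a * exp (∫ t in a..s, c t) := by
  set C : ℝ → ℝ := fun s => ∫ t in a..s, c t
  have hC : ∀ s, HasDerivAt C (c s) s := fun s => (hc.integral_hasStrictDerivAt a s).hasDerivAt
  have hconst : ∀ s, HasDerivAt (fun s => u s * exp (-C s)) 0 s := fun s =>
    ((hu s).mul (hC s).neg.exp).congr_deriv (by ring)
  have key := is_const_of_deriv_eq_zero (fun s => (hconst s).differentiableAt)
    (fun s => (hconst s).deriv) s a
  simp only [C, intervalIntegral.integral_same, neg_zero, exp_zero, mul_one] at key
  rw [← key, mul_assoc, ← exp_add, neg_add_cancel, exp_zero, mul_one]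

theorem strictMono_or_strictAnti_of_hasDerivAt_ne_zero {f f' : ℝ → ℝ}
    (hf : ∀ x, HasDerivAt f (f' x) x) (hf' : ∀ x, f' x ≠ 0) : StrictMono f ∨ StrictAnti f := by
  rcases hasDerivWithinAt_forall_lt_or_forall_gt_of_forall_ne convex_univ
    (fun x _ => (hf x).hasDerivWithinAt) (fun x _ => hf' x) with hneg | hpos
  · exact Or.inr (strictAnti_of_hasDerivAt_neg hf fun x => hneg x (mem_univ x))
  · exact Or.inl (strictMono_of_hasDerivAt_pos hf fun x => hpos x (mem_univ x))

theorem Real.exists_sin_eq_zero_of_cos_eq_zero {x y : ℝ} (hxy : x ≠ y) (hx : cos x = 0)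
    (hy : cos y = 0) : ∃ w ∈ uIcc x y, sin w = 0 := by
  wlog hlt : x < y generalizing x y
  · rw [uIcc_comm]
    exact this hxy.symm hy hx (hxy.symm.lt_of_le (not_lt.1 hlt))
  obtain ⟨k, rfl⟩ := cos_eq_zero_iff.1 hx
  obtain ⟨m, rfl⟩ := cos_eq_zero_iff.1 hy
  have hkm : (k : ℝ) + 1 ≤ m := by
    have : (k : ℝ) < m := by
      by_contra! h
      nlinarith [pi_pos]
    exact_mod_cast Int.add_one_le_of_lt (by exact_mod_cast this)
  rw [uIcc_of_lt hlt]
  refine ⟨((k + 1 : ℤ) : ℝ) * π, ⟨?_, ?_⟩, sin_int_mul_pi _⟩ <;>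
    · push_cast
      nlinarith [pi_pos]

theorem eq_of_cos_eq_zero_of_forall_sin_ne_zero {θ : ℝ → ℝ} (hθ : Continuous θ)
    (hsin : ∀ s, sin (θ s) ≠ 0) {a b : ℝ} (ha : cos (θ a) = 0) (hb : cos (θ b) = 0) :
    θ a = θ b := by
  by_contra hab
  obtain ⟨w, hw, hsw⟩ := Real.exists_sin_eq_zero_of_cos_eq_zero hab ha hb
  obtain ⟨t, -, rfl⟩ := intermediate_value_uIcc hθ.continuousOn hw
  exact hsin t hsw

theorem stmt8_general
    (lam μ θ₀ : ℝ) (y z θ : ℝ → ℝ)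
    (hθ0 : θ 0 = θ₀)
    (hz : ∀ s : ℝ, HasDerivAt z (Real.sin (θ s)) s)
    (hθ : ∀ s : ℝ, HasDerivAt θ
      (-lam * Real.exp (-z s) * Real.sin (θ s) +
        μ * (Real.cos (θ s) - y s * Real.exp (-z s) * Real.sin (θ s))) s)
    (hμ : μ = 0)
    (hne : μ * Real.cos θ₀ - (θ₀ - θ₀ + lam) * Real.sin θ₀ ≠ 0) :
    (∀ s : ℝ, Real.sin (θ s) ≠ 0) ∧
    (StrictMono z ∨ StrictAnti z) ∧
    {s : ℝ | Real.cos (θ s) = 0}.Subsingleton := by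
  subst hμ
  obtain ⟨hlam, hsin₀⟩ : lam ≠ 0 ∧ sin θ₀ ≠ 0 := by simpa using hne
  replace hθ : ∀ s, HasDerivAt θ (-lam * exp (-z s) * sin (θ s)) s := by simpa using hθ
  have hθc : Continuous θ := continuous_iff_continuousAt.2 fun s => (hθ s).continuousAt
  have hzc : Continuous z := continuous_iff_continuousAt.2 fun s => (hz s).continuousAt
  have hsin : ∀ s, sin (θ s) ≠ 0 := by
    intro s
    have hlin : ∀ s, HasDerivAt (fun s => sin (θ s))
        ((-lam * exp (-z s) * cos (θ s)) * sin (θ s)) s := fun s => by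
      convert (hθ s).sin using 1
      ring
    rw [eq_mul_exp_integral_of_hasDerivAt (by fun_prop) hlin 0 s, hθ0]
    exact mul_ne_zero hsin₀ (exp_ne_zero _)
  have hθinj : Function.Injective θ := by
    rcases strictMono_or_strictAnti_of_hasDerivAt_ne_zero hθ
      (fun s => mul_ne_zero (mul_ne_zero (neg_ne_zero.2 hlam) (exp_ne_zero _)) (hsin s)) with h | h
    exacts [h.injective, h.injective]
  refine ⟨hsin, strictMono_or_strictAnti_of_hasDerivAt_ne_zero hz hsin, ?_⟩
  intro a ha b hb
  exact hθinj (eq_of_cos_eq_zero_of_forall_sin_ne_zero hθc hsin ha hb)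

theorem stmt8
    (lam μ θ₀ : ℝ) (y z θ : ℝ → ℝ)
    (hy0 : y 0 = 0) (hz0 : z 0 = 0) (hθ0 : θ 0 = θ₀)
    (hy : ∀ s : ℝ, HasDerivAt y (Real.exp (z s) * Real.cos (θ s)) s)
    (hz : ∀ s : ℝ, HasDerivAt z (Real.sin (θ s)) s)
    (hθ : ∀ s : ℝ, HasDerivAt θ
      (-lam * Real.exp (-z s) * Real.sin (θ s) +
        μ * (Real.cos (θ s) - y s * Real.exp (-z s) * Real.sin (θ s))) s)
    (hμ : μ = 0)
    (hne : μ * Real.cos θ₀ - (θ₀ - θ₀ + lam) * Real.sin θ₀ ≠ 0) :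
    (∀ s : ℝ, Real.sin (θ s) ≠ 0) ∧
    (StrictMono z ∨ StrictAnti z) ∧
    {s : ℝ | Real.cos (θ s) = 0}.Subsingleton :=
  stmt8_general lam μ θ₀ y z θ hθ0 hz hθ hμ hne
end

section
/- Let (y, z, θ) solve the translator system with μ = 0, λ ≠ 0 and f(θ₀) ≠ 0, where f(θ) = −(θ − θ₀ + λ)·sin θ. Then |y(s)| → +∞ both as s → +∞ and as s → −∞. -/
/-!
With `μ = 0` the quantity `θ - λ e^{-z}` is conserved, so `λ e^{-z} = θ - θ₀ + λ` never vanishes.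
Uniqueness for `θ' = -λ e^{-z} sin θ` keeps `sin θ ≠ 0`, so `θ` is strictly monotone between two
consecutive multiples of `π` and converges to some `L` with `(L - θ₀ + λ) sin L = 0`.
Since `y' = e^z cos θ = λ cos θ / (θ - θ₀ + λ)`, either `L - θ₀ + λ ≠ 0`, `sin L = 0` and `y'`
tends to `λ cos L / (L - θ₀ + λ) ≠ 0`; or `e^z → ∞`, and then `|y'| → ∞` if `cos L ≠ 0`, while
for `cos L = 0` writing `θ = L + u` gives `y' = -λ sin L · sin u / u → -λ sin L ≠ 0`.
So `|y'|` is eventually bounded away from `0`, which forces `|y| → ∞` as `s → +∞`.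
The limit `s → -∞` follows from the symmetry
`(y, z, θ, λ, θ₀)(s) ↦ (-y(-s), z(-s), -θ(-s), -λ, -θ₀)` of the system.
-/

open Real Filter Topology Set

lemma eq_const_of_hasDerivAt_mul_of_eq_zero {x a g : ℝ → ℝ} {K : NNReal}
    (ha : Continuous a) (hg : LipschitzWith K g)
    (hx : ∀ t, HasDerivAt x (a t * g (x t)) t) {t₁ : ℝ} (hzero : g (x t₁) = 0) (t : ℝ) :
    x t = x t₁ := by
  obtain ⟨A, B, ht, ht₁⟩ : ∃ A B, t ∈ Ioo A B ∧ t₁ ∈ Ioo A B :=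
    ⟨min t t₁ - 1, max t t₁ + 1, by grind, by grind⟩
  obtain ⟨M, hM⟩ := isCompact_Icc.exists_bound_of_continuousOn (s := Icc A B) ha.continuousOn
  have hv : ∀ s ∈ Ioo A B, LipschitzOnWith (M.toNNReal * K) (fun w => a s * g w) univ := by
    intro s hs
    refine LipschitzWith.lipschitzOnWith (LipschitzWith.of_dist_le_mul fun w₁ w₂ => ?_)
    rw [Real.dist_eq, ← mul_sub, abs_mul, NNReal.coe_mul, Real.coe_toNNReal', mul_assoc]
    exact mul_le_mul (le_max_of_le_left (hM s (Ioo_subset_Icc_self hs)))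
      (hg.dist_le_mul w₁ w₂) (abs_nonneg _) (le_max_right _ _)
  have hconst : ∀ s, HasDerivAt (fun _ => x t₁) (a s * g (x t₁)) s := fun s => by
    rw [hzero, mul_zero]
    exact hasDerivAt_const s _
  exact ODE_solution_unique_of_mem_Ioo hv ht₁ (fun s _ => ⟨hx s, trivial⟩)
    (fun s _ => ⟨hconst s, trivial⟩) rfl ht

lemma exists_int_forall_mem_Ioo_of_sin_ne_zero {θ : ℝ → ℝ} (hθ : Continuous θ)
    (h : ∀ s, sin (θ s) ≠ 0) : ∃ n : ℤ, ∀ s, θ s ∈ Ioo (n * π) ((n + 1) * π) := by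
  refine ⟨⌊θ 0 / π⌋, fun s => ?_⟩
  set n := ⌊θ 0 / π⌋
  have hmiss : ∀ m : ℤ, (m : ℝ) * π ∉ range θ := by
    rintro m ⟨t, ht⟩
    exact h t (ht ▸ sin_int_mul_pi m)
  have hlow : n * π ≤ θ 0 := (le_div_iff₀ pi_pos).1 (Int.floor_le _)
  have hhigh : θ 0 < (n + 1) * π := (div_lt_iff₀ pi_pos).1 (Int.lt_floor_add_one _)
  constructor
  · by_contra hs
    exact hmiss n (intermediate_value_univ s 0 hθ ⟨not_lt.1 hs, hlow⟩)
  · by_contra hs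
    have hmem : ((n + 1 : ℤ) : ℝ) * π ∈ Icc (θ 0) (θ s) := by
      push_cast
      exact ⟨hhigh.le, not_lt.1 hs⟩
    exact hmiss (n + 1) (intermediate_value_univ 0 s hθ hmem)

lemma tendsto_atTop_of_hasDerivAt_of_le {g G : ℝ → ℝ} (hg : ∀ s, HasDerivAt g (G s) s)
    {c s₀ : ℝ} (hc : 0 < c) (hG : ∀ s ≥ s₀, c ≤ G s) : Tendsto g atTop atTop := by
  have hgrowth : ∀ s ≥ s₀, c * (s - s₀) ≤ g s - g s₀ := fun s hs =>
    (convex_Ici s₀).mul_sub_le_image_sub_of_le_deriv (HasDerivAt.continuousOn fun t _ => hg t)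
      (fun t _ => (hg t).differentiableAt.differentiableWithinAt)
      (fun t ht => (hg t).deriv ▸ hG t (interior_subset ht)) s₀ self_mem_Ici s hs hs
  refine tendsto_atTop_mono' atTop ?_ (tendsto_atTop_add_const_left _ (g s₀)
    ((tendsto_atTop_add_const_right _ (-s₀) tendsto_id).const_mul_atTop hc))
  filter_upwards [eventually_ge_atTop s₀] with s hs
  simp only [id, ← sub_eq_add_neg]
  linarith [hgrowth s hs]

/-- By Darboux, a derivative bounded away from `0` in absolute value has eventually constant
sign. -/
lemma tendsto_abs_atTop_of_hasDerivAt_of_le_abs {g G : ℝ → ℝ}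
    (hg : ∀ s, HasDerivAt g (G s) s) {c : ℝ} (hc : 0 < c) (hG : ∀ᶠ s in atTop, c ≤ |G s|) :
    Tendsto (fun s => |g s|) atTop atTop := by
  obtain ⟨s₀, hs₀⟩ := eventually_atTop.1 hG
  rcases hasDerivWithinAt_forall_lt_or_forall_gt_of_forall_ne (convex_Ici s₀)
    (fun s _ => (hg s).hasDerivWithinAt) (m := 0)
    (fun s hs => abs_pos.1 (hc.trans_le (hs₀ s hs))) with hneg | hpos
  · have := tendsto_atTop_of_hasDerivAt_of_le (fun s => (hg s).neg) hc fun s hs =>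
      le_neg.2 (by have := hs₀ s hs; rw [abs_of_neg (hneg s hs)] at this; linarith)
    simpa only [Function.comp_def, Pi.neg_apply, abs_neg] using
      tendsto_abs_atTop_atTop.comp this
  · exact tendsto_abs_atTop_atTop.comp (tendsto_atTop_of_hasDerivAt_of_le hg hc fun s hs =>
      (abs_of_pos (hpos s hs)).symm ▸ hs₀ s hs)

lemma tendsto_abs_atTop_of_hasDerivAt_of_tendsto {g G : ℝ → ℝ}
    (hg : ∀ s, HasDerivAt g (G s) s) {A : ℝ} (hGA : Tendsto G atTop (𝓝 A)) (hA : A ≠ 0) :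
    Tendsto (fun s => |g s|) atTop atTop :=
  tendsto_abs_atTop_of_hasDerivAt_of_le_abs hg (half_pos (abs_pos.2 hA))
    (hGA.abs.eventually_const_le (half_lt_self (abs_pos.2 hA)))

lemma eq_zero_of_tendsto_of_hasDerivAt {g G : ℝ → ℝ} (hg : ∀ s, HasDerivAt g (G s) s)
    {L A : ℝ} (hgL : Tendsto g atTop (𝓝 L)) (hGA : Tendsto G atTop (𝓝 A)) : A = 0 :=
  by_contra fun hA => not_tendsto_atTop_of_tendsto_nhds hgL.abs
    (tendsto_abs_atTop_of_hasDerivAt_of_tendsto hg hGA hA)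

lemma exists_tendsto_of_hasDerivAt_ne_zero {g G : ℝ → ℝ} (hg : ∀ s, HasDerivAt g (G s) s)
    (hG : ∀ s, G s ≠ 0) (hbdd : BddBelow (range g)) (hbdd' : BddAbove (range g)) :
    ∃ L, Tendsto g atTop (𝓝 L) := by
  rcases hasDerivWithinAt_forall_lt_or_forall_gt_of_forall_ne convex_univ
    (fun s _ => (hg s).hasDerivWithinAt) (fun s _ => hG s) with hneg | hpos
  · exact ⟨_, tendsto_atTop_ciInf
      (strictAnti_of_hasDerivAt_neg hg fun s => hneg s trivial).antitone hbdd⟩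
  · exact ⟨_, tendsto_atTop_ciSup
      (strictMono_of_hasDerivAt_pos hg fun s => hpos s trivial).monotone hbdd'⟩

structure IsTranslatorSolution (lam θ₀ : ℝ) (y z θ : ℝ → ℝ) : Prop where
  z_zero : z 0 = 0
  θ_zero : θ 0 = θ₀
  hasDerivAt_y : ∀ s, HasDerivAt y (exp (z s) * cos (θ s)) s
  hasDerivAt_z : ∀ s, HasDerivAt z (sin (θ s)) s
  hasDerivAt_θ : ∀ s, HasDerivAt θ (-lam * exp (-z s) * sin (θ s)) s

namespace IsTranslatorSolution

variable {lam θ₀ : ℝ} {y z θ : ℝ → ℝ}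

lemma reverse (h : IsTranslatorSolution lam θ₀ y z θ) :
    IsTranslatorSolution (-lam) (-θ₀) (fun s => -y (-s)) (fun s => z (-s)) (fun s => -θ (-s))
    where
  z_zero := by simpa using h.z_zero
  θ_zero := by simpa using h.θ_zero
  hasDerivAt_y s := by
    simpa [Function.comp_def] using ((h.hasDerivAt_y (-s)).comp s (hasDerivAt_neg s)).fun_neg
  hasDerivAt_z s := by
    simpa [Function.comp_def] using (h.hasDerivAt_z (-s)).comp s (hasDerivAt_neg s)
  hasDerivAt_θ s := by
    simpa [Function.comp_def] using ((h.hasDerivAt_θ (-s)).comp s (hasDerivAt_neg s)).fun_neg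

lemma continuous_z (h : IsTranslatorSolution lam θ₀ y z θ) : Continuous z :=
  continuous_iff_continuousAt.2 fun s => (h.hasDerivAt_z s).continuousAt

lemma continuous_θ (h : IsTranslatorSolution lam θ₀ y z θ) : Continuous θ :=
  continuous_iff_continuousAt.2 fun s => (h.hasDerivAt_θ s).continuousAt

lemma mul_exp_neg_z (h : IsTranslatorSolution lam θ₀ y z θ) (s : ℝ) :
    lam * exp (-z s) = θ s - θ₀ + lam := by
  have hderiv : ∀ t, HasDerivAt (fun t => θ t - lam * exp (-z t)) 0 t := fun t =>
    ((h.hasDerivAt_θ t).fun_sub (((h.hasDerivAt_z t).fun_neg.exp).const_mul lam)).congr_deriv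
      (by ring)
  have := is_const_of_deriv_eq_zero (fun t => (hderiv t).differentiableAt)
    (fun t => (hderiv t).deriv) s 0
  simp only [h.θ_zero, h.z_zero, neg_zero, exp_zero, mul_one] at this
  linarith

lemma sub_add_ne_zero (h : IsTranslatorSolution lam θ₀ y z θ) (hlam : lam ≠ 0) (s : ℝ) :
    θ s - θ₀ + lam ≠ 0 :=
  h.mul_exp_neg_z s ▸ mul_ne_zero hlam (exp_pos _).ne'

lemma exp_z (h : IsTranslatorSolution lam θ₀ y z θ) (hlam : lam ≠ 0) (s : ℝ) :
    exp (z s) = lam / (θ s - θ₀ + lam) := by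
  rw [eq_div_iff (h.sub_add_ne_zero hlam s), ← h.mul_exp_neg_z, mul_left_comm, ← exp_add,
    add_neg_cancel, exp_zero, mul_one]

lemma sin_θ_ne_zero (h : IsTranslatorSolution lam θ₀ y z θ) (hsin : sin θ₀ ≠ 0) (s : ℝ) :
    sin (θ s) ≠ 0 := fun hs =>
  hsin (h.θ_zero ▸ eq_const_of_hasDerivAt_mul_of_eq_zero
    (by have := h.continuous_z; fun_prop) lipschitzWith_sin h.hasDerivAt_θ hs 0 ▸ hs)

lemma exists_tendsto_θ (h : IsTranslatorSolution lam θ₀ y z θ) (hlam : lam ≠ 0)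
    (hsin : sin θ₀ ≠ 0) : ∃ L, Tendsto θ atTop (𝓝 L) := by
  obtain ⟨n, hn⟩ :=
    exists_int_forall_mem_Ioo_of_sin_ne_zero h.continuous_θ (h.sin_θ_ne_zero hsin)
  refine exists_tendsto_of_hasDerivAt_ne_zero h.hasDerivAt_θ (fun s => ?_)
    ⟨n * π, forall_mem_range.2 fun s => (hn s).1.le⟩
    ⟨(n + 1) * π, forall_mem_range.2 fun s => (hn s).2.le⟩
  exact mul_ne_zero (mul_ne_zero (neg_ne_zero.2 hlam) (exp_pos _).ne') (h.sin_θ_ne_zero hsin s)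

lemma tendsto_deriv_θ (h : IsTranslatorSolution lam θ₀ y z θ) {L : ℝ}
    (hL : Tendsto θ atTop (𝓝 L)) :
    Tendsto (fun s => -lam * exp (-z s) * sin (θ s)) atTop (𝓝 (-(L - θ₀ + lam) * sin L)) :=
  ((((hL.sub_const θ₀).add_const lam).neg).mul ((continuous_sin.tendsto L).comp hL)).congr
    fun s => by simp only [Function.comp_apply, ← h.mul_exp_neg_z]; ring

lemma tendsto_exp_z_atTop (h : IsTranslatorSolution lam θ₀ y z θ) (hlam : lam ≠ 0)
    (hL : Tendsto θ atTop (𝓝 (θ₀ - lam))) : Tendsto (fun s => exp (z s)) atTop atTop := by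
  have hexp_neg : Tendsto (fun s => exp (-z s)) atTop (𝓝[>] 0) := by
    refine tendsto_nhdsWithin_iff.2 ⟨?_, Eventually.of_forall fun s => exp_pos _⟩
    have := ((hL.sub_const θ₀).add_const lam).const_mul lam⁻¹
    rw [sub_sub_cancel_left, neg_add_cancel, mul_zero] at this
    exact this.congr fun s => by rw [← h.mul_exp_neg_z, inv_mul_cancel_left₀ hlam]
  exact (tendsto_inv_nhdsGT_zero.comp hexp_neg).congr fun s => by simp [exp_neg]

lemma tendsto_abs_y (h : IsTranslatorSolution lam θ₀ y z θ) (hlam : lam ≠ 0)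
    (hsin : sin θ₀ ≠ 0) : Tendsto (fun s => |y s|) atTop atTop := by
  obtain ⟨L, hL⟩ := h.exists_tendsto_θ hlam hsin
  have hequil : -(L - θ₀ + lam) * sin L = 0 :=
    eq_zero_of_tendsto_of_hasDerivAt h.hasDerivAt_θ hL (h.tendsto_deriv_θ hL)
  have hu : Tendsto (fun s => θ s - θ₀ + lam) atTop (𝓝 (L - θ₀ + lam)) :=
    (hL.sub_const θ₀).add_const lam
  have hcos : Tendsto (fun s => cos (θ s)) atTop (𝓝 (cos L)) :=
    (continuous_cos.tendsto L).comp hL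
  rcases eq_or_ne (L - θ₀ + lam) 0 with hU | hU
  · obtain rfl : L = θ₀ - lam := by linarith
    rcases eq_or_ne (cos (θ₀ - lam)) 0 with hcosL | hcosL
    · have hsinL : sin (θ₀ - lam) ≠ 0 := fun hs => by
        simpa [hs, hcosL] using sin_sq_add_cos_sq (θ₀ - lam)
      have hY (s : ℝ) :
          exp (z s) * cos (θ s) = -lam * sin (θ₀ - lam) * sinc (θ s - θ₀ + lam) := by
        have hθ : θ s = (θ₀ - lam) + (θ s - θ₀ + lam) := by ring
        rw [h.exp_z hlam, hθ, cos_add, hcosL, ← hθ, sinc_of_ne_zero (h.sub_add_ne_zero hlam s)]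
        field_simp
        ring
      refine tendsto_abs_atTop_of_hasDerivAt_of_tendsto h.hasDerivAt_y
        (A := -lam * sin (θ₀ - lam) * 1) ?_ (by simp [hlam, hsinL])
      rw [funext hY, ← sinc_zero, ← hU]
      exact tendsto_const_nhds.mul ((continuous_sinc.tendsto _).comp hu)
    · refine tendsto_abs_atTop_of_hasDerivAt_of_le_abs h.hasDerivAt_y one_pos ?_
      simp only [abs_mul, abs_exp]
      exact ((h.tendsto_exp_z_atTop hlam hL).atTop_mul_pos (abs_pos.2 hcosL)
        hcos.abs).eventually_ge_atTop 1
  · have hsinL : sin L = 0 := (mul_eq_zero.1 hequil).resolve_left (neg_ne_zero.2 hU)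
    have hcosL : cos L ≠ 0 := fun hc => by simpa [hsinL, hc] using sin_sq_add_cos_sq L
    refine tendsto_abs_atTop_of_hasDerivAt_of_tendsto h.hasDerivAt_y
      (A := lam * cos L / (L - θ₀ + lam)) ?_ (by simp [hlam, hcosL, hU])
    simp only [h.exp_z hlam, div_mul_eq_mul_div]
    exact (tendsto_const_nhds.mul hcos).div hu hU

end IsTranslatorSolution

theorem stmt10_general
    (lam μ θ₀ : ℝ) (y z θ : ℝ → ℝ)
    (hz0 : z 0 = 0) (hθ0 : θ 0 = θ₀)
    (hy : ∀ s : ℝ, HasDerivAt y (Real.exp (z s) * Real.cos (θ s)) s)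
    (hz : ∀ s : ℝ, HasDerivAt z (Real.sin (θ s)) s)
    (hθ : ∀ s : ℝ, HasDerivAt θ
      (-lam * Real.exp (-z s) * Real.sin (θ s) +
        μ * (Real.cos (θ s) - y s * Real.exp (-z s) * Real.sin (θ s))) s)
    (hμ : μ = 0) (hlam : lam ≠ 0)
    (hne : μ * Real.cos θ₀ - (θ₀ - θ₀ + lam) * Real.sin θ₀ ≠ 0) :
    Tendsto (fun s => |y s|) atTop atTop ∧
    Tendsto (fun s => |y s|) atBot atTop := by
  subst hμ
  have h : IsTranslatorSolution lam θ₀ y z θ :=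
    ⟨hz0, hθ0, hy, hz, fun s => by simpa using hθ s⟩
  have hsin : sin θ₀ ≠ 0 := right_ne_zero_of_mul (by simpa using hne)
  refine ⟨h.tendsto_abs_y hlam hsin, ?_⟩
  have := h.reverse.tendsto_abs_y (neg_ne_zero.2 hlam) (by simpa using hsin)
  simpa [Function.comp_def] using this.comp tendsto_neg_atBot_atTop

theorem stmt10
    (lam μ θ₀ : ℝ) (y z θ : ℝ → ℝ)
    (hy0 : y 0 = 0) (hz0 : z 0 = 0) (hθ0 : θ 0 = θ₀)
    (hy : ∀ s : ℝ, HasDerivAt y (Real.exp (z s) * Real.cos (θ s)) s)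
    (hz : ∀ s : ℝ, HasDerivAt z (Real.sin (θ s)) s)
    (hθ : ∀ s : ℝ, HasDerivAt θ
      (-lam * Real.exp (-z s) * Real.sin (θ s) +
        μ * (Real.cos (θ s) - y s * Real.exp (-z s) * Real.sin (θ s))) s)
    (hμ : μ = 0) (hlam : lam ≠ 0)
    (hne : μ * Real.cos θ₀ - (θ₀ - θ₀ + lam) * Real.sin θ₀ ≠ 0) :
    Tendsto (fun s => |y s|) atTop atTop ∧
    Tendsto (fun s => |y s|) atBot atTop :=
  stmt10_general lam μ θ₀ y z θ hz0 hθ0 hy hz hθ hμ hlam hne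
end

section
/- Let (y, z, θ) solve the translator system with μ = 0, λ ≠ 0 and f(θ₀) ≠ 0, where f(θ) = −(θ − θ₀ + λ)·sin θ. Then at least one of the two limits lim_{s→+∞} z(s), lim_{s→−∞} z(s) exists and is finite. -/
/-!
With `μ = 0` the quantity `θ - λ e^{-z}` is conserved, so `z` solves the autonomous scalar
equation `z' = g z` with `g x = sin (θ₀ - λ + λ e^{-x})` and `g 0 = sin θ₀ ≠ 0`. As `x → -∞` the
argument of the sine runs past a multiple of `π`, so `g` vanishes somewhere below `0`; let `b` be
the greatest such zero. If `g 0 < 0`, the trajectory can neither reach the equilibrium `b`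
(uniqueness for a `C¹` vector field) nor rise above `0`, so for `s ≥ 0` it decreases inside
`(b, 0]` and converges as `s → +∞`. If `g 0 > 0`, the same argument runs backwards in time.
-/

open Real Filter Topology Set

theorem eq_of_hasDerivAt_of_apply_eq_zero {E : Type*} [NormedAddCommGroup E] [NormedSpace ℝ E]
    [ProperSpace E] {v : E → E} (hv : ContDiff ℝ 1 v) {f : ℝ → E}
    (hf : ∀ t, HasDerivAt f (v (f t)) t) {t₀ : ℝ} (h : v (f t₀) = 0) (t : ℝ) :
    f t = f t₀ := by
  set I := Icc (min t t₀ - 1) (max t t₀ + 1)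
  obtain ⟨R, hR⟩ := isCompact_Icc.exists_bound_of_continuousOn
    (HasDerivAt.continuousOn fun s (_ : s ∈ I) => hf s)
  obtain ⟨K, hK⟩ := hv.contDiffOn.exists_lipschitzOnWith one_ne_zero
    (convex_closedBall (0 : E) R) (isCompact_closedBall 0 R)
  have hsub : Ioo (min t t₀ - 1) (max t t₀ + 1) ⊆ I := Ioo_subset_Icc_self
  refine ODE_solution_unique_of_mem_Ioo (fun _ _ => hK) (t₀ := t₀) ?_
    (fun s hs => ⟨hf s, mem_closedBall_zero_iff.2 (hR s (hsub hs))⟩)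
    (fun s hs => ⟨h ▸ hasDerivAt_const s (f t₀),
      mem_closedBall_zero_iff.2 (hR t₀ (hsub ?_))⟩) rfl ?_
  all_goals constructor <;> grind

theorem Continuous.exists_zero_forall_mem_Ioc_neg {g : ℝ → ℝ} (hg : Continuous g) {x₀ a : ℝ}
    (hx₀ : x₀ ≤ a) (h₀ : g x₀ = 0) (ha : g a < 0) :
    ∃ b < a, g b = 0 ∧ ∀ x ∈ Ioc b a, g x < 0 := by
  obtain ⟨b, ⟨⟨hx₀b, hba⟩, hb⟩, hgreatest⟩ := (isCompact_Icc.inter_right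
    (isClosed_singleton.preimage hg)).exists_isGreatest ⟨x₀, ⟨le_rfl, hx₀⟩, h₀⟩
  refine ⟨b, hba.lt_of_ne (by rintro rfl; simp_all), hb, fun x hx => not_le.1 fun hgx => ?_⟩
  obtain ⟨c, hc, hgc⟩ := intermediate_value_Icc' hx.2 hg.continuousOn ⟨ha.le, hgx⟩
  have : c ≤ b := hgreatest ⟨⟨by linarith [hx.1, hc.1], hc.2⟩, hgc⟩
  linarith [hx.1, hc.1]

section AutonomousODE

variable {g z : ℝ → ℝ}

theorem lt_of_hasDerivAt_of_apply_eq_zero (hg : ContDiff ℝ 1 g)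
    (hz : ∀ t, HasDerivAt z (g (z t)) t) {b : ℝ} (hb : g b = 0) (h₀ : b < z 0) (t : ℝ) :
    b < z t := by
  by_contra! ht
  obtain ⟨s, -, hs⟩ := intermediate_value_uIcc (a := 0) (b := t)
    (HasDerivAt.continuousOn fun s _ => hz s) (mem_uIcc.2 (Or.inr ⟨ht, h₀.le⟩))
  have := eq_of_hasDerivAt_of_apply_eq_zero hg hz (hs ▸ hb) 0
  linarith

theorem le_of_hasDerivAt_of_neg (hz : ∀ t, HasDerivAt z (g (z t)) t) (h₀ : g (z 0) < 0)
    {t : ℝ} (ht : 0 ≤ t) : z t ≤ z 0 :=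
  image_le_of_deriv_right_lt_deriv_boundary' (B := fun _ => z 0) (B' := 0)
    (HasDerivAt.continuousOn fun s _ => hz s) (fun s _ => (hz s).hasDerivWithinAt) le_rfl
    continuousOn_const (fun _ _ => hasDerivWithinAt_const _ _ _)
    (fun s _ hs => by simpa [hs] using h₀) ⟨ht, le_rfl⟩

theorem exists_tendsto_atTop_of_hasDerivAt (hg : ContDiff ℝ 1 g)
    (hz : ∀ t, HasDerivAt z (g (z t)) t) (h₀ : g (z 0) < 0) {x₀ : ℝ} (hx₀ : x₀ ≤ z 0)
    (hgx₀ : g x₀ = 0) : ∃ L, Tendsto z atTop (𝓝 L) := by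
  obtain ⟨b, hbz, hb, hneg⟩ := hg.continuous.exists_zero_forall_mem_Ioc_neg hx₀ hgx₀ h₀
  have hbelow := lt_of_hasDerivAt_of_apply_eq_zero hg hz hb hbz
  have hanti : AntitoneOn z (Ici 0) := by
    refine antitoneOn_of_hasDerivWithinAt_nonpos (convex_Ici 0)
      (HasDerivAt.continuousOn fun s _ => hz s) (fun s _ => (hz s).hasDerivWithinAt)
      fun s hs => (hneg _ ⟨hbelow s, le_of_hasDerivAt_of_neg hz h₀ ?_⟩).le
    exact (interior_subset hs : s ∈ Ici 0)
  set w : ℝ → ℝ := fun t => z (max t 0)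
  have hw : Antitone w := fun s t hst =>
    hanti (le_max_right s 0) (le_max_right t 0) (max_le_max_right 0 hst)
  refine ⟨⨅ t, w t, (tendsto_atTop_ciInf hw ⟨b, ?_⟩).congr' ?_⟩
  · rintro _ ⟨t, rfl⟩
    exact (hbelow _).le
  · filter_upwards [eventually_ge_atTop 0] with t ht
    simp [w, max_eq_left ht]

theorem exists_tendsto_atBot_of_hasDerivAt (hg : ContDiff ℝ 1 g)
    (hz : ∀ t, HasDerivAt z (g (z t)) t) (h₀ : 0 < g (z 0)) {x₀ : ℝ} (hx₀ : x₀ ≤ z 0)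
    (hgx₀ : g x₀ = 0) : ∃ L, Tendsto z atBot (𝓝 L) := by
  have hz' (t : ℝ) : HasDerivAt (fun s => z (-s)) (-g (z (-t))) t := by
    simpa [Function.comp_def] using (hz (-t)).scomp t (hasDerivAt_neg t)
  obtain ⟨L, hL⟩ := exists_tendsto_atTop_of_hasDerivAt hg.neg hz' (by simpa using h₀)
    (by simpa using hx₀) (by simpa using hgx₀)
  exact ⟨L, by simpa [Function.comp_def] using hL.comp tendsto_neg_atBot_atTop⟩

end AutonomousODE

theorem exists_le_zero_sin_add_mul_exp_neg_eq_zero (θ₀ lam : ℝ) (hlam : lam ≠ 0) :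
    ∃ x ≤ 0, sin (θ₀ - lam + lam * exp (-x)) = 0 := by
  obtain ⟨n, hn⟩ : ∃ n : ℤ, 0 ≤ (n * π - θ₀) / lam := by
    rcases hlam.lt_or_gt with hlam | hlam
    · refine ⟨⌊θ₀ / π⌋, div_nonneg_of_nonpos (sub_nonpos.2 ?_) hlam.le⟩
      exact (le_div_iff₀ pi_pos).1 (Int.floor_le _)
    · refine ⟨⌈θ₀ / π⌉, div_nonneg (sub_nonneg.2 ?_) hlam.le⟩
      exact (div_le_iff₀ pi_pos).1 (Int.le_ceil _)
  refine ⟨-log (1 + (n * π - θ₀) / lam), neg_nonpos.2 (log_nonneg (by linarith)), ?_⟩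
  rw [neg_neg, exp_log (by linarith), mul_add, mul_div_cancel₀ _ hlam]
  convert sin_int_mul_pi n using 2
  ring

theorem translator_sub_mul_exp_neg_eq {lam : ℝ} {z θ : ℝ → ℝ}
    (hz : ∀ s, HasDerivAt z (sin (θ s)) s)
    (hθ : ∀ s, HasDerivAt θ (-lam * exp (-z s) * sin (θ s)) s) (s : ℝ) :
    θ s - lam * exp (-z s) = θ 0 - lam * exp (-z 0) := by
  have hderiv (s : ℝ) : HasDerivAt (fun s => θ s - lam * exp (-z s)) 0 s :=
    ((hθ s).sub ((hz s).neg.exp.const_mul lam)).congr_deriv (by rw [Pi.neg_apply]; ring)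
  exact is_const_of_deriv_eq_zero (fun s => (hderiv s).differentiableAt)
    (fun s => (hderiv s).deriv) s 0

theorem stmt12_general
    (lam μ θ₀ : ℝ) (y z θ : ℝ → ℝ)
    (hz0 : z 0 = 0) (hθ0 : θ 0 = θ₀)
    (hz : ∀ s : ℝ, HasDerivAt z (Real.sin (θ s)) s)
    (hθ : ∀ s : ℝ, HasDerivAt θ
      (-lam * Real.exp (-z s) * Real.sin (θ s) +
        μ * (Real.cos (θ s) - y s * Real.exp (-z s) * Real.sin (θ s))) s)
    (hμ : μ = 0) (hlam : lam ≠ 0)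
    (hne : μ * Real.cos θ₀ - (θ₀ - θ₀ + lam) * Real.sin θ₀ ≠ 0) :
    (∃ L : ℝ, Tendsto z atTop (𝓝 L)) ∨ (∃ L : ℝ, Tendsto z atBot (𝓝 L)) := by
  subst hμ
  set g : ℝ → ℝ := fun x => sin (θ₀ - lam + lam * exp (-x))
  have hg : ContDiff ℝ 1 g := by fun_prop
  have hθz (s : ℝ) : θ s = θ₀ - lam + lam * exp (-z s) := by
    have := translator_sub_mul_exp_neg_eq hz (by simpa using hθ) s
    rw [hz0, hθ0, neg_zero, exp_zero, mul_one] at this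
    linarith
  have hzg (s : ℝ) : HasDerivAt z (g (z s)) s := by
    convert hz s using 2
    exact (hθz s).symm
  have hg₀ : g (z 0) ≠ 0 := by simpa [g, hz0, hlam] using hne
  obtain ⟨x₀, hx₀, hgx₀⟩ := exists_le_zero_sin_add_mul_exp_neg_eq_zero θ₀ lam hlam
  rcases hg₀.lt_or_gt with hneg | hpos
  · exact .inl (exists_tendsto_atTop_of_hasDerivAt hg hzg hneg (hx₀.trans_eq hz0.symm) hgx₀)
  · exact .inr (exists_tendsto_atBot_of_hasDerivAt hg hzg hpos (hx₀.trans_eq hz0.symm) hgx₀)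

theorem stmt12
    (lam μ θ₀ : ℝ) (y z θ : ℝ → ℝ)
    (hy0 : y 0 = 0) (hz0 : z 0 = 0) (hθ0 : θ 0 = θ₀)
    (hy : ∀ s : ℝ, HasDerivAt y (Real.exp (z s) * Real.cos (θ s)) s)
    (hz : ∀ s : ℝ, HasDerivAt z (Real.sin (θ s)) s)
    (hθ : ∀ s : ℝ, HasDerivAt θ
      (-lam * Real.exp (-z s) * Real.sin (θ s) +
        μ * (Real.cos (θ s) - y s * Real.exp (-z s) * Real.sin (θ s))) s)
    (hμ : μ = 0) (hlam : lam ≠ 0)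
    (hne : μ * Real.cos θ₀ - (θ₀ - θ₀ + lam) * Real.sin θ₀ ≠ 0) :
    (∃ L : ℝ, Tendsto z atTop (𝓝 L)) ∨ (∃ L : ℝ, Tendsto z atBot (𝓝 L)) :=
  stmt12_general lam μ θ₀ y z θ hz0 hθ0 hz hθ hμ hlam hne
end

section
/- Let θ : ℝ → ℝ satisfy θ'(s) = −θ(s)·sin θ(s) for all s ∈ ℝ, with θ(0) = θ₀ ∈ (0, π). Then θ is strictly decreasing, θ(s) → 0 as s → +∞, and s·θ(s) → 1 as s → +∞. -/
/-! The equilibria 0 and π of `θ' = -θ sin θ` cannot be reached in finite time (uniqueness for a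
locally Lipschitz field), so `θ` stays in `(0, π)`, where the field is negative: `θ` decreases to a
limit, which must again be an equilibrium, hence `0`. Finally `1 / θ` has derivative
`sin θ / θ → 1`, so `1 / θ s ~ s`. -/

open Real Filter Topology Set Asymptotics

theorem eq_of_hasDerivAt_of_apply_eq_zero_s13 {E : Type*} [NormedAddCommGroup E] [NormedSpace ℝ E]
    {v : E → E} {x : ℝ → E} {c : E} {t₀ : ℝ} (hv : ContDiffAt ℝ 1 v c)
    (hx : ∀ t, HasDerivAt x (v (x t)) t) (hc : v c = 0) (ht₀ : x t₀ = c) (t : ℝ) :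
    x t = c := by
  obtain ⟨K, U, hU, hK⟩ := hv.exists_lipschitzOnWith
  have hcont : Continuous x := continuous_iff_continuousAt.2 fun t => (hx t).continuousAt
  -- the level set `{t | x t = c}` is open by local uniqueness and closed by continuity
  have hopen : IsOpen {t | x t = c} := isOpen_iff_mem_nhds.2 fun t (ht : x t = c) =>
    ODE_solution_unique_of_eventually (v := fun _ => v) (s := fun _ => U) (K := K)
      (Eventually.of_forall fun _ => hK)
      (Eventually.of_forall hx |>.and (hcont.continuousAt.preimage_mem_nhds (ht ▸ hU)))
      (Eventually.of_forall fun s =>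
        ⟨by simpa [hc] using hasDerivAt_const s c, mem_of_mem_nhds hU⟩) ht
  have hclopen : IsClopen {t | x t = c} := ⟨isClosed_eq hcont continuous_const, hopen⟩
  exact eq_univ_iff_forall.1 (hclopen.eq_univ ⟨t₀, ht₀⟩) t

theorem Continuous.mem_Ioo_of_forall_ne {α β : Type*} [TopologicalSpace α] [PreconnectedSpace α]
    [LinearOrder β] [TopologicalSpace β] [OrderClosedTopology β] {x : α → β} {a b : β} {t₀ : α}
    (hx : Continuous x) (ha : ∀ t, x t ≠ a) (hb : ∀ t, x t ≠ b) (h₀ : x t₀ ∈ Ioo a b) (t : α) :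
    x t ∈ Ioo a b := by
  have hrange := isPreconnected_range hx
  by_contra h
  rw [mem_Ioo, not_and_or, not_lt, not_lt] at h
  rcases h with h | h
  · obtain ⟨s, hs⟩ := hrange.Icc_subset ⟨t, rfl⟩ ⟨t₀, rfl⟩ ⟨h, h₀.1.le⟩
    exact ha s hs
  · obtain ⟨s, hs⟩ := hrange.Icc_subset ⟨t₀, rfl⟩ ⟨t, rfl⟩ ⟨h₀.2.le, h⟩
    exact hb s hs

theorem apply_eq_zero_of_hasDerivAt_of_tendsto {v x : ℝ → ℝ} {L : ℝ} (hv : ContinuousAt v L)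
    (hx : ∀ t, HasDerivAt x (v (x t)) t) (hL : Tendsto x atTop (𝓝 L)) : v L = 0 := by
  have hincr : Tendsto (fun t => x (t + 1) - x t) atTop (𝓝 0) := by
    simpa using (hL.comp (tendsto_atTop_add_const_right _ 1 tendsto_id)).sub hL
  -- by the mean value theorem `x (t + 1) - x t` is a value of `v ∘ x` at a later time
  have hincr' : Tendsto (fun t => x (t + 1) - x t) atTop (𝓝 (v L)) := by
    have hvx := Metric.tendsto_atTop.1 (hv.tendsto.comp hL)
    refine Metric.tendsto_atTop.2 fun ε hε => ?_
    obtain ⟨T, hT⟩ := hvx ε hε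
    refine ⟨T, fun t ht => ?_⟩
    obtain ⟨ξ, hξ, hslope⟩ := exists_hasDerivAt_eq_slope x (fun s => v (x s)) (lt_add_one t)
      (HasDerivAt.continuousOn fun s _ => hx s) fun s _ => hx s
    rw [add_sub_cancel_left, div_one] at hslope
    exact hslope ▸ hT ξ (ht.trans hξ.1.le)
  exact tendsto_nhds_unique hincr' hincr

theorem isLittleO_id_of_hasDerivAt_of_tendsto_zero {g g' : ℝ → ℝ}
    (hg : ∀ t, HasDerivAt g (g' t) t) (hg' : Tendsto g' atTop (𝓝 0)) : g =o[atTop] id := by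
  refine isLittleO_iff.2 fun ε hε => ?_
  obtain ⟨T, hT⟩ := eventually_atTop.1 (hg'.eventually (Metric.closedBall_mem_nhds 0 (half_pos hε)))
  have hgrowth : ∀ s ≥ T, ‖g s - g T‖ ≤ ε / 2 * (s - T) := fun s hs =>
    norm_image_sub_le_of_norm_deriv_le_segment' (fun t _ => (hg t).hasDerivWithinAt)
      (fun t ht => by simpa using hT t ht.1) s ⟨hs, le_rfl⟩
  filter_upwards [eventually_ge_atTop T, eventually_ge_atTop 0,
    eventually_ge_atTop (2 * ‖g T‖ / ε - T)] with s hsT hs0 hs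
  have hgT : ‖g T‖ ≤ ε / 2 * (s + T) := by
    rw [sub_le_iff_le_add, div_le_iff₀ hε] at hs
    linarith
  calc ‖g s‖ ≤ ‖g T‖ + ‖g s - g T‖ := norm_le_norm_add_norm_sub' _ _
    _ ≤ ε / 2 * (s + T) + ε / 2 * (s - T) := add_le_add hgT (hgrowth s hsT)
    _ = ε * ‖id s‖ := by rw [id, Real.norm_of_nonneg hs0]; ring

theorem tendsto_div_id_of_hasDerivAt_of_tendsto {f f' : ℝ → ℝ} {c : ℝ}
    (hf : ∀ t, HasDerivAt f (f' t) t) (hf' : Tendsto f' atTop (𝓝 c)) :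
    Tendsto (fun s => f s / s) atTop (𝓝 c) := by
  have hlo := isLittleO_id_of_hasDerivAt_of_tendsto_zero
    (fun t => (hf t).sub ((hasDerivAt_id t).const_mul c)) (by simpa using hf'.sub_const c)
  refine (zero_add c ▸ hlo.tendsto_div_nhds_zero.add_const c).congr' ?_
  filter_upwards [eventually_ne_atTop 0] with s hs
  simp [sub_div, hs]

theorem stmt13 (θ₀ : ℝ) (hθ₀ : θ₀ ∈ Set.Ioo 0 π) (θ : ℝ → ℝ)
    (hθ0 : θ 0 = θ₀)
    (hθ : ∀ s : ℝ, HasDerivAt θ (-(θ s) * Real.sin (θ s)) s) :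
    StrictAnti θ ∧
    Tendsto θ atTop (𝓝 0) ∧
    Tendsto (fun s => s * θ s) atTop (𝓝 1) := by
  have hv : ContDiff ℝ 1 fun x : ℝ => -x * sin x := by fun_prop
  have hcont : Continuous θ := continuous_iff_continuousAt.2 fun s => (hθ s).continuousAt
  have hequilibrium : ∀ t c, θ t = c → -c * sin c = 0 → θ₀ = c := fun t c ht hc =>
    hθ0 ▸ eq_of_hasDerivAt_of_apply_eq_zero_s13 hv.contDiffAt hθ hc ht 0
  have hmem : ∀ s, θ s ∈ Ioo 0 π := hcont.mem_Ioo_of_forall_ne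
    (fun t ht => hθ₀.1.ne' (hequilibrium t 0 ht (by simp)))
    (fun t ht => hθ₀.2.ne (hequilibrium t π ht (by simp))) (hθ0 ▸ hθ₀)
  have hanti : StrictAnti θ := strictAnti_of_hasDerivAt_neg hθ fun s =>
    neg_mul (θ s) _ ▸ neg_neg_of_pos
      (mul_pos (hmem s).1 (sin_pos_of_pos_of_lt_pi (hmem s).1 (hmem s).2))
  have hlim : Tendsto θ atTop (𝓝 0) := by
    have hbdd : BddBelow (range θ) := ⟨0, forall_mem_range.2 fun s => (hmem s).1.le⟩
    have hL := tendsto_atTop_ciInf hanti.antitone hbdd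
    have hL0 : 0 ≤ ⨅ s, θ s := le_ciInf fun s => (hmem s).1.le
    have hLπ : ⨅ s, θ s < π := (ciInf_le hbdd 0).trans_lt (hmem 0).2
    suffices hL_eq : ⨅ s, θ s = 0 from hL_eq ▸ hL
    have hvL := apply_eq_zero_of_hasDerivAt_of_tendsto hv.continuous.continuousAt hθ hL
    rcases mul_eq_zero.1 hvL with h | h
    · exact neg_eq_zero.1 h
    · exact (sin_eq_zero_iff_of_lt_of_lt (by linarith [pi_pos]) hLπ).1 h
  have hsinc : Tendsto (fun s => sin (θ s) / θ s) atTop (𝓝 1) :=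
    (sinc_zero ▸ (continuous_sinc.tendsto 0).comp hlim).congr fun s =>
      sinc_of_ne_zero (hmem s).1.ne'
  have hinv : ∀ s, HasDerivAt (fun t => (θ t)⁻¹) (sin (θ s) / θ s) s := fun s =>
    ((hθ s).inv (hmem s).1.ne').congr_deriv (by field_simp [(hmem s).1.ne'])
  refine ⟨hanti, hlim, ?_⟩
  simpa using (tendsto_div_id_of_hasDerivAt_of_tendsto hinv hsinc).inv₀ one_ne_zero
end

section
/- Let θ : ℝ → ℝ satisfy θ'(s) = −θ(s)·sin θ(s) for all s with θ(0) = θ₀ ∈ (0, π), and let y, z : ℝ → ℝ satisfy y(0) = z(0) = 0, z'(s) = sin θ(s), y'(s) = e^{z(s)}·cos θ(s). Then as s → +∞: z(s)/log s → 1, the function y(s) is eventually positive, and z(s) − (1/2)·log y(s) converges to a finite limit (i.e., the profile curve is asymptotic to a half-logarithmic curve z = (1/2) log(y − y₀) + z₀). -/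
/-!
The quantity `θ e^z` is conserved, so `e^z = C / θ` with `C = θ(0) e^{z(0)}`. The angle stays in
`(0, π)`, decreases, and tends to the equilibrium `0`; then `(1/θ)' = sin θ / θ → 1` gives
`1/θ ~ s`, hence `z = log C + log (1/θ) = log s + O(1)`. Next `y' = C cos θ / θ ~ C s`, so
`y ~ C s² / 2 ~ C / (2 θ²)`, and `z - ½ log y = log C - ½ log (y θ²)` converges. Both asymptotic
steps are instances of L'Hôpital's rule at `+∞`.
-/

open Real Filter Topology Set

lemma eventually_div_lt_of_eventually_deriv_div_le {f g f' g' : ℝ → ℝ} {b b' : ℝ}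
    (hf : ∀ s, HasDerivAt f (f' s) s) (hg : ∀ s, HasDerivAt g (g' s) s)
    (hg' : ∀ᶠ s in atTop, 0 < g' s) (hg_top : Tendsto g atTop atTop)
    (h : ∀ᶠ s in atTop, f' s / g' s ≤ b) (hb : b < b') :
    ∀ᶠ s in atTop, f s / g s < b' := by
  obtain ⟨a, ha⟩ := eventually_atTop.1 (hg'.and h)
  have hd : ∀ s, HasDerivAt (fun s => f s - b * g s) (f' s - b * g' s) s :=
    fun s => (hf s).sub ((hg s).const_mul b)
  have hanti : AntitoneOn (fun s => f s - b * g s) (Ici a) := by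
    refine antitoneOn_of_hasDerivWithinAt_nonpos (convex_Ici a)
      (fun s _ => (hd s).continuousAt.continuousWithinAt)
      (fun s _ => (hd s).hasDerivWithinAt) fun s hs => ?_
    obtain ⟨hpos, hle⟩ := ha s (interior_subset hs)
    rw [div_le_iff₀ hpos] at hle
    linarith
  have hrem : Tendsto (fun s => (f a - b * g a) / g s) atTop (𝓝 0) :=
    tendsto_const_nhds.div_atTop hg_top
  filter_upwards [eventually_ge_atTop a, hg_top.eventually_gt_atTop 0,
    hrem.eventually (gt_mem_nhds (sub_pos.2 hb))] with s hs hgs hsmall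
  have hfs : f s - b * g s ≤ f a - b * g a := hanti self_mem_Ici hs hs
  rw [div_lt_iff₀ hgs] at hsmall ⊢
  linarith

/-- L'Hôpital's rule in the form `∞ / ∞` at `+∞`; only the denominator needs to diverge. -/
lemma tendsto_div_of_tendsto_deriv_div_atTop {f g f' g' : ℝ → ℝ} {c : ℝ}
    (hf : ∀ s, HasDerivAt f (f' s) s) (hg : ∀ s, HasDerivAt g (g' s) s)
    (hg' : ∀ᶠ s in atTop, 0 < g' s) (hg_top : Tendsto g atTop atTop)
    (h : Tendsto (fun s => f' s / g' s) atTop (𝓝 c)) :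
    Tendsto (fun s => f s / g s) atTop (𝓝 c) := by
  refine tendsto_order.2 ⟨fun b hb => ?_, fun b hb => ?_⟩
  · obtain ⟨b', hbb', hb'c⟩ := exists_between hb
    have hlow : ∀ᶠ s in atTop, -f' s / g' s ≤ -b' := by
      filter_upwards [h.eventually (lt_mem_nhds hb'c)] with s hs
      rw [neg_div]; exact neg_le_neg hs.le
    filter_upwards [eventually_div_lt_of_eventually_deriv_div_le (f := fun s => -f s)
      (fun s => (hf s).neg) hg hg' hg_top hlow (neg_lt_neg hbb')] with s hs
    rw [neg_div] at hs
    exact lt_of_neg_lt_neg hs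
  · obtain ⟨b', hcb', hb'b⟩ := exists_between hb
    exact eventually_div_lt_of_eventually_deriv_div_le hf hg hg' hg_top
      ((h.eventually (gt_mem_nhds hcb')).mono fun s hs => hs.le) hb'b

lemma eq_mul_exp_integral_of_hasDerivAt_mul {u a : ℝ → ℝ} (ha : Continuous a)
    (hu : ∀ s, HasDerivAt u (a s * u s) s) (s : ℝ) :
    u s = u 0 * exp (∫ t in (0 : ℝ)..s, a t) := by
  have hA : ∀ s, HasDerivAt (fun s => ∫ t in (0 : ℝ)..s, a t) (a s) s :=
    fun s => (ha.integral_hasStrictDerivAt 0 s).hasDerivAt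
  have hconst : ∀ s, HasDerivAt (fun s => u s * exp (-∫ t in (0 : ℝ)..s, a t)) 0 s :=
    fun s => ((hu s).mul (hA s).neg.exp).congr_deriv (by ring)
  have h := is_const_of_deriv_eq_zero (fun s => (hconst s).differentiableAt)
    (fun s => (hconst s).deriv) s 0
  simp only [intervalIntegral.integral_same, neg_zero, exp_zero, mul_one] at h
  rw [← h, mul_assoc, ← exp_add, neg_add_cancel, exp_zero, mul_one]

lemma pos_of_hasDerivAt_mul {u a : ℝ → ℝ} (ha : Continuous a)
    (hu : ∀ s, HasDerivAt u (a s * u s) s) (h0 : 0 < u 0) (s : ℝ) : 0 < u s := by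
  rw [eq_mul_exp_integral_of_hasDerivAt_mul ha hu s]
  positivity

lemma tendsto_div_log_of_tendsto_sub_log {f : ℝ → ℝ} {L : ℝ}
    (h : Tendsto (fun s => f s - log s) atTop (𝓝 L)) :
    Tendsto (fun s => f s / log s) atTop (𝓝 1) := by
  have h1 := (h.div_atTop tendsto_log_atTop).const_add 1
  rw [add_zero] at h1
  refine h1.congr' ?_
  filter_upwards [eventually_gt_atTop 1] with s hs
  have := (log_pos hs).ne'
  field_simp
  ring

def IsAngleSolution (θ : ℝ → ℝ) : Prop := ∀ s, HasDerivAt θ (-θ s * sin (θ s)) s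

namespace IsAngleSolution

variable {θ y z : ℝ → ℝ}

lemma continuous (h : IsAngleSolution θ) : Continuous θ :=
  continuous_iff_continuousAt.2 fun s => (h s).continuousAt

lemma pos (h : IsAngleSolution θ) (h0 : 0 < θ 0) (s : ℝ) : 0 < θ s :=
  pos_of_hasDerivAt_mul (a := fun s => -sin (θ s)) (continuous_sin.comp h.continuous).neg
    (fun s => (h s).congr_deriv (by ring)) h0 s

/-- `π` is an equilibrium: `cos (θ / 2)` solves a linear equation, so it cannot reach `0`. -/
lemma lt_pi (h : IsAngleSolution θ) (hneg : -π < θ 0) (hπ : θ 0 < π) (s : ℝ) : θ s < π := by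
  have hcos : ∀ s, 0 < cos (θ s / 2) := by
    refine pos_of_hasDerivAt_mul (a := fun s => θ s * sin (θ s / 2) ^ 2)
      (h.continuous.mul ((continuous_sin.comp (h.continuous.div_const 2)).pow 2))
      (fun s => ((h s).div_const 2).cos.congr_deriv ?_)
      (cos_pos_of_mem_Ioo ⟨by linarith, by linarith⟩)
    have hsin : sin (θ s) = 2 * sin (θ s / 2) * cos (θ s / 2) := by
      rw [← sin_two_mul]; ring_nf
    rw [hsin]; ring
  by_contra! hge
  obtain ⟨u, -, hu⟩ := intermediate_value_uIcc h.continuous.continuousOn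
    (show π ∈ uIcc (θ 0) (θ s) from mem_uIcc.2 (Or.inl ⟨hπ.le, hge⟩))
  simpa [hu] using hcos u

lemma mem_Ioo (h : IsAngleSolution θ) (h0 : θ 0 ∈ Ioo 0 π) (s : ℝ) : θ s ∈ Ioo 0 π :=
  ⟨h.pos h0.1 s, h.lt_pi (by linarith [h0.1, pi_pos]) h0.2 s⟩

lemma antitone (h : IsAngleSolution θ) (h0 : θ 0 ∈ Ioo 0 π) : Antitone θ :=
  antitone_of_hasDerivAt_nonpos h fun s => show -θ s * sin (θ s) ≤ 0 by
    have hθ := h.mem_Ioo h0 s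
    have := sin_pos_of_pos_of_lt_pi hθ.1 hθ.2
    nlinarith [hθ.1]

/-- The limit `ℓ` of `θ` must be an equilibrium: otherwise `θ s / s → -ℓ sin ℓ ≠ 0`. -/
lemma tendsto_zero (h : IsAngleSolution θ) (h0 : θ 0 ∈ Ioo 0 π) :
    Tendsto θ atTop (𝓝 0) := by
  have hbdd : BddBelow (range θ) := ⟨0, forall_mem_range.2 fun s => (h.pos h0.1 s).le⟩
  set ℓ := ⨅ s, θ s
  have hlim : Tendsto θ atTop (𝓝 ℓ) := tendsto_atTop_ciInf (h.antitone h0) hbdd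
  have hderiv : Tendsto (fun s => -θ s * sin (θ s) / 1) atTop (𝓝 (-ℓ * sin ℓ)) := by
    simpa using hlim.neg.mul ((continuous_sin.tendsto ℓ).comp hlim)
  have hslope := tendsto_div_of_tendsto_deriv_div_atTop h hasDerivAt_id
    (Eventually.of_forall fun _ => one_pos) tendsto_id hderiv
  have hequil : -ℓ * sin ℓ = 0 := tendsto_nhds_unique hslope (hlim.div_atTop tendsto_id)
  have hℓ : ℓ ∈ Ico 0 π := ⟨le_ciInf fun s => (h.pos h0.1 s).le,
    (ciInf_le hbdd 0).trans_lt h0.2⟩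
  rcases hℓ.1.eq_or_lt with hℓ0 | hℓ0
  · rwa [← hℓ0] at hlim
  · nlinarith [sin_pos_of_pos_of_lt_pi hℓ0 hℓ.2]

lemma tendsto_inv_div_self (h : IsAngleSolution θ) (h0 : θ 0 ∈ Ioo 0 π) :
    Tendsto (fun s => (θ s)⁻¹ / s) atTop (𝓝 1) := by
  have hne : ∀ s, θ s ≠ 0 := fun s => (h.pos h0.1 s).ne'
  have hderiv : ∀ s, HasDerivAt (fun s => (θ s)⁻¹) (sinc (θ s)) s := fun s =>
    ((h s).inv (hne s)).congr_deriv (by rw [sinc_of_ne_zero (hne s)]; field_simp)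
  have hsinc : Tendsto (fun s => sinc (θ s)) atTop (𝓝 1) := by
    simpa [Function.comp_def] using (continuous_sinc.tendsto 0).comp (h.tendsto_zero h0)
  exact tendsto_div_of_tendsto_deriv_div_atTop hderiv hasDerivAt_id
    (Eventually.of_forall fun _ => one_pos) tendsto_id (by simpa using hsinc)

lemma mul_exp_eq (h : IsAngleSolution θ) (hz : ∀ s, HasDerivAt z (sin (θ s)) s) (s : ℝ) :
    θ s * exp (z s) = θ 0 * exp (z 0) := by
  have hconst : ∀ s, HasDerivAt (fun s => θ s * exp (z s)) 0 s :=
    fun s => ((h s).mul (hz s).exp).congr_deriv (by ring)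
  exact is_const_of_deriv_eq_zero (fun s => (hconst s).differentiableAt)
    (fun s => (hconst s).deriv) s 0

lemma exp_eq (h : IsAngleSolution θ) (h0 : θ 0 ∈ Ioo 0 π)
    (hz : ∀ s, HasDerivAt z (sin (θ s)) s) (s : ℝ) :
    exp (z s) = θ 0 * exp (z 0) * (θ s)⁻¹ := by
  rw [← h.mul_exp_eq hz s, mul_comm (θ s), mul_inv_cancel_right₀ (h.pos h0.1 s).ne']

lemma tendsto_sub_log (h : IsAngleSolution θ) (h0 : θ 0 ∈ Ioo 0 π)
    (hz : ∀ s, HasDerivAt z (sin (θ s)) s) :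
    Tendsto (fun s => z s - log s) atTop (𝓝 (log (θ 0 * exp (z 0)))) := by
  have hC : 0 < θ 0 * exp (z 0) := mul_pos h0.1 (exp_pos _)
  have hlim : Tendsto (fun s => θ 0 * exp (z 0) * ((θ s)⁻¹ / s)) atTop
      (𝓝 (θ 0 * exp (z 0))) := by
    simpa using (h.tendsto_inv_div_self h0).const_mul (θ 0 * exp (z 0))
  refine (hlim.log hC.ne').congr' ?_
  filter_upwards [eventually_gt_atTop 0] with s hs
  rw [← mul_div_assoc, ← h.exp_eq h0 hz, log_div (exp_pos _).ne' hs.ne', log_exp]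

lemma tendsto_div_sq (h : IsAngleSolution θ) (h0 : θ 0 ∈ Ioo 0 π)
    (hz : ∀ s, HasDerivAt z (sin (θ s)) s)
    (hy : ∀ s, HasDerivAt y (exp (z s) * cos (θ s)) s) :
    Tendsto (fun s => y s / s ^ 2) atTop (𝓝 (θ 0 * exp (z 0) / 2)) := by
  have hcos : Tendsto (fun s => cos (θ s)) atTop (𝓝 1) := by
    simpa [Function.comp_def] using (continuous_cos.tendsto 0).comp (h.tendsto_zero h0)
  have hderiv : Tendsto (fun s => exp (z s) * cos (θ s) / (2 * s)) atTop
      (𝓝 (θ 0 * exp (z 0) / 2)) := by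
    have := ((h.tendsto_inv_div_self h0).mul hcos).const_mul (θ 0 * exp (z 0) / 2)
    rw [mul_one, mul_one] at this
    refine this.congr fun s => ?_
    rw [h.exp_eq h0 hz s]
    ring
  refine tendsto_div_of_tendsto_deriv_div_atTop hy (fun s => ?_)
    (eventually_gt_atTop 0 |>.mono fun s hs => by positivity) (tendsto_pow_atTop two_ne_zero)
    hderiv
  simpa using hasDerivAt_pow 2 s

lemma eventually_pos (h : IsAngleSolution θ) (h0 : θ 0 ∈ Ioo 0 π)
    (hz : ∀ s, HasDerivAt z (sin (θ s)) s)
    (hy : ∀ s, HasDerivAt y (exp (z s) * cos (θ s)) s) :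
    ∀ᶠ s in atTop, 0 < y s := by
  have hC : 0 < θ 0 * exp (z 0) / 2 := by have := h0.1; positivity
  filter_upwards [(h.tendsto_div_sq h0 hz hy).eventually (eventually_gt_nhds hC),
    eventually_ne_atTop 0] with s hs hs0
  exact (div_pos_iff_of_pos_right (by positivity)).1 hs

lemma tendsto_sub_half_log (h : IsAngleSolution θ) (h0 : θ 0 ∈ Ioo 0 π)
    (hz : ∀ s, HasDerivAt z (sin (θ s)) s)
    (hy : ∀ s, HasDerivAt y (exp (z s) * cos (θ s)) s) :
    Tendsto (fun s => z s - 1 / 2 * log (y s)) atTop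
      (𝓝 (log (θ 0 * exp (z 0)) - 1 / 2 * log (θ 0 * exp (z 0) / 2))) := by
  have hC : θ 0 * exp (z 0) / 2 ≠ 0 := by have := h0.1; positivity
  refine ((h.tendsto_sub_log h0 hz).sub
    (((h.tendsto_div_sq h0 hz hy).log hC).const_mul (1 / 2))).congr' ?_
  filter_upwards [h.eventually_pos h0 hz hy, eventually_gt_atTop 0] with s hys hs
  rw [log_div hys.ne' (by positivity), log_pow]
  push_cast
  ring

end IsAngleSolution

theorem stmt14_general (θ₀ : ℝ) (hθ₀ : θ₀ ∈ Set.Ioo 0 π) (θ y z : ℝ → ℝ)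
    (hθ0 : θ 0 = θ₀)
    (hθ : ∀ s : ℝ, HasDerivAt θ (-(θ s) * Real.sin (θ s)) s)
    (hz : ∀ s : ℝ, HasDerivAt z (Real.sin (θ s)) s)
    (hy : ∀ s : ℝ, HasDerivAt y (Real.exp (z s) * Real.cos (θ s)) s) :
    Tendsto (fun s => z s / Real.log s) atTop (𝓝 1) ∧
    (∀ᶠ s in atTop, 0 < y s) ∧
    (∃ L : ℝ, Tendsto (fun s => z s - (1 / 2) * Real.log (y s)) atTop (𝓝 L)) := by
  have h : IsAngleSolution θ := hθ
  have h0 : θ 0 ∈ Ioo 0 π := hθ0 ▸ hθ₀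
  exact ⟨tendsto_div_log_of_tendsto_sub_log (h.tendsto_sub_log h0 hz),
    h.eventually_pos h0 hz hy, _, h.tendsto_sub_half_log h0 hz hy⟩

theorem stmt14 (θ₀ : ℝ) (hθ₀ : θ₀ ∈ Set.Ioo 0 π) (θ y z : ℝ → ℝ)
    (hθ0 : θ 0 = θ₀)
    (hθ : ∀ s : ℝ, HasDerivAt θ (-(θ s) * Real.sin (θ s)) s)
    (hy0 : y 0 = 0) (hz0 : z 0 = 0)
    (hz : ∀ s : ℝ, HasDerivAt z (Real.sin (θ s)) s)
    (hy : ∀ s : ℝ, HasDerivAt y (Real.exp (z s) * Real.cos (θ s)) s) :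
    Tendsto (fun s => z s / Real.log s) atTop (𝓝 1) ∧
    (∀ᶠ s in atTop, 0 < y s) ∧
    (∃ L : ℝ, Tendsto (fun s => z s - (1 / 2) * Real.log (y s)) atTop (𝓝 L)) :=
  stmt14_general θ₀ hθ₀ θ y z hθ0 hθ hz hy
end

section
/- Let (y, z, θ) solve the translator system with μ = 0, λ ≠ 0 and f(θ₀) ≠ 0, where f(θ) = −(θ − θ₀ + λ)·sin θ. Suppose θ(s) → θ₀ − λ as s → +∞ and set σ₁ = sin(θ₀ − λ), σ₂ = cos(θ₀ − λ), assuming 0 < σ₁ < 1. Then z(s)/s → σ₁ as s → +∞, and e^{−σ₁ s}·y(s) converges to a finite nonzero limit with the same sign as σ₂ (so the profile curve is asymptotic to a logarithmic curve z = log(y₀ ± y) + z₀). -/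
/-!
With `μ = 0` we have `θ' = -λ e^{-z} sin θ = λ (e^{-z})'`, so `θ - λ e^{-z}` is conserved and
`θ - (θ₀ - λ) = λ e^{-z}`. Since `z' = sin θ → σ₁ > 0`, `z` grows linearly (L'Hôpital), hence
`z' - σ₁` decays exponentially and `z - σ₁ s` converges to some `c`. A second application of
L'Hôpital, to `y` against `e^{σ₁ s}`, gives `e^{-σ₁ s} y → e^c σ₂ / σ₁`, whose product with `σ₂` is
positive because `σ₂² = 1 - σ₁² > 0`.
-/

open Real Filter Topology Asymptotics MeasureTheory Set

theorem isLittleO_atTop_of_hasDerivAt {u g u' g' : ℝ → ℝ}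
    (hu : ∀ s, HasDerivAt u (u' s) s) (hg : ∀ s, HasDerivAt g (g' s) s)
    (hg_top : Tendsto g atTop atTop) (hg' : ∀ᶠ s in atTop, 0 < g' s)
    (ho : u' =o[atTop] g') : u =o[atTop] g := by
  refine isLittleO_iff.2 fun c hc => ?_
  obtain ⟨M, hM⟩ := eventually_atTop.1 ((isLittleO_iff.1 ho (half_pos hc)).and hg')
  have hinc : ∀ s ≥ M, |u s - u M| ≤ c / 2 * (g s - g M) := fun s hs =>
    image_norm_le_of_norm_deriv_right_le_deriv_boundary (f := fun t => u t - u M)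
      (fun t _ => ((hu t).sub_const (u M)).continuousAt.continuousWithinAt)
      (fun t _ => ((hu t).sub_const _).hasDerivWithinAt)
      (by simp) (fun t => ((hg t).sub_const (g M)).const_mul (c / 2))
      (fun t ht => by simpa [abs_of_pos (hM t ht.1).2] using (hM t ht.1).1) ⟨hs, le_rfl⟩
  filter_upwards [hg_top.eventually_ge_atTop (2 * |u M| / c - g M),
    hg_top.eventually_gt_atTop 0, eventually_ge_atTop M] with s hs hpos hsM
  rw [norm_eq_abs, norm_eq_abs, abs_of_pos hpos]
  have hlarge : |u M| ≤ c / 2 * (g s + g M) := by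
    have := mul_le_mul_of_nonneg_left hs (half_pos hc).le
    rw [mul_sub, show c / 2 * (2 * |u M| / c) = |u M| by field_simp] at this
    linarith
  linarith [abs_sub_abs_le_abs_sub (u s) (u M), hinc s hsM]

theorem tendsto_div_atTop_of_tendsto_deriv_div {f g f' g' : ℝ → ℝ} {K : ℝ}
    (hf : ∀ s, HasDerivAt f (f' s) s) (hg : ∀ s, HasDerivAt g (g' s) s)
    (hg_top : Tendsto g atTop atTop) (hg' : ∀ᶠ s in atTop, 0 < g' s)
    (hK : Tendsto (fun s => f' s / g' s) atTop (𝓝 K)) :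
    Tendsto (fun s => f s / g s) atTop (𝓝 K) := by
  have ho : (fun s => f' s - K * g' s) =o[atTop] g' := by
    rw [isLittleO_iff_tendsto' (hg'.mono fun s hs h0 => absurd h0 hs.ne')]
    rw [← sub_self K]
    refine (hK.sub_const K).congr' ?_
    filter_upwards [hg'] with s hs
    field_simp
  have hrem := (isLittleO_atTop_of_hasDerivAt (fun s => (hf s).sub ((hg s).const_mul K)) hg
    hg_top hg' ho).tendsto_div_nhds_zero
  simpa using (hrem.add_const K).congr' <| by
    filter_upwards [hg_top.eventually_gt_atTop 0] with s hs
    simp only [Pi.sub_apply]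
    field_simp
    ring

theorem exists_tendsto_of_hasDerivAt_of_abs_le_exp {f f' : ℝ → ℝ} {C k a : ℝ} (hk : 0 < k)
    (hf : ∀ s, HasDerivAt f (f' s) s) (hbound : ∀ s ≥ a, |f' s| ≤ C * exp (-k * s)) :
    ∃ c, Tendsto f atTop (𝓝 c) := by
  have hmeas : AEStronglyMeasurable f' := by
    rw [show f' = deriv f from funext fun s => (hf s).deriv.symm]
    exact (measurable_deriv f).aestronglyMeasurable
  have hint : IntegrableOn f' (Ioi a) :=
    ((exp_neg_integrableOn_Ioi a hk).const_mul C).mono' hmeas.restrict <|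
      ae_restrict_of_forall_mem measurableSet_Ioi fun s hs => hbound s (le_of_lt hs)
  exact ⟨_, tendsto_limUnder_of_hasDerivAt_of_integrableOn_Ioi (fun s _ => hf s) hint⟩

theorem tendsto_exp_neg_mul_mul_of_hasDerivAt {y z φ : ℝ → ℝ} {σ c l : ℝ} (hσ : 0 < σ)
    (hy : ∀ s, HasDerivAt y (exp (z s) * φ s) s)
    (hz : Tendsto (fun s => z s - σ * s) atTop (𝓝 c)) (hφ : Tendsto φ atTop (𝓝 l)) :
    Tendsto (fun s => exp (-(σ * s)) * y s) atTop (𝓝 (exp c * l / σ)) := by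
  have hexp : ∀ s, HasDerivAt (fun s => exp (σ * s)) (σ * exp (σ * s)) s := fun s => by
    simpa [mul_comm] using ((hasDerivAt_id s).const_mul σ).exp
  have hratio : Tendsto (fun s => exp (z s) * φ s / (σ * exp (σ * s))) atTop
      (𝓝 (exp c * l / σ)) := by
    refine (((continuous_exp.tendsto c).comp hz).mul hφ).div_const σ |>.congr fun s => ?_
    simp only [Function.comp_apply, exp_sub]
    field_simp
  have hexp_top : Tendsto (fun s => exp (σ * s)) atTop atTop :=
    tendsto_exp_atTop.comp (tendsto_id.const_mul_atTop hσ)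
  simpa [exp_neg, div_eq_inv_mul] using tendsto_div_atTop_of_tendsto_deriv_div hy hexp hexp_top
    (Eventually.of_forall fun s => by positivity) hratio

namespace Translator

variable {lam : ℝ} {z θ : ℝ → ℝ}

theorem theta_sub_mul_exp_neg_eq (hz : ∀ s, HasDerivAt z (sin (θ s)) s)
    (hθ : ∀ s, HasDerivAt θ (-lam * exp (-z s) * sin (θ s)) s) (s : ℝ) :
    θ s - lam * exp (-z s) = θ 0 - lam * exp (-z 0) := by
  have hderiv : ∀ t, HasDerivAt (fun t => θ t - lam * exp (-z t)) 0 t := fun t =>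
    ((hθ t).sub (((hz t).neg.exp).const_mul lam)).congr_deriv (by simp only [Pi.neg_apply]; ring)
  exact is_const_of_deriv_eq_zero (fun t => (hderiv t).differentiableAt)
    (fun t => (hderiv t).deriv) s 0

theorem exists_tendsto_sub_mul {α : ℝ} (hα : 0 < sin α)
    (hz : ∀ s, HasDerivAt z (sin (θ s)) s) (hθz : ∀ s, θ s = α + lam * exp (-z s))
    (hzs : Tendsto (fun s => z s / s) atTop (𝓝 (sin α))) :
    ∃ c, Tendsto (fun s => z s - sin α * s) atTop (𝓝 c) := by
  obtain ⟨a, ha⟩ : ∃ a, ∀ s ≥ a, sin α / 2 * s ≤ z s := by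
    refine eventually_atTop.1 ?_
    filter_upwards [hzs.eventually_const_lt (half_lt_self hα), eventually_gt_atTop 0]
      with s hs hpos
    exact ((lt_div_iff₀ hpos).1 hs).le
  refine exists_tendsto_of_hasDerivAt_of_abs_le_exp (half_pos hα) (C := |lam|) (a := a)
    (fun s => (hz s).sub (by simpa using (hasDerivAt_id s).const_mul (sin α))) fun s hs => ?_
  calc |sin (θ s) - sin α| ≤ |θ s - α| := abs_sin_sub_sin_le _ _
    _ = |lam| * exp (-z s) := by rw [hθz, add_sub_cancel_left, abs_mul, abs_of_pos (exp_pos _)]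
    _ ≤ |lam| * exp (-(sin α / 2) * s) := by gcongr; linarith [ha s hs]

end Translator

theorem stmt16_general
    (lam μ θ₀ : ℝ) (y z θ : ℝ → ℝ)
    (hz0 : z 0 = 0) (hθ0 : θ 0 = θ₀)
    (hy : ∀ s : ℝ, HasDerivAt y (Real.exp (z s) * Real.cos (θ s)) s)
    (hz : ∀ s : ℝ, HasDerivAt z (Real.sin (θ s)) s)
    (hθ : ∀ s : ℝ, HasDerivAt θ
      (-lam * Real.exp (-z s) * Real.sin (θ s) +
        μ * (Real.cos (θ s) - y s * Real.exp (-z s) * Real.sin (θ s))) s)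
    (hμ : μ = 0)
    (hconv : Tendsto θ atTop (𝓝 (θ₀ - lam)))
    (σ₁ σ₂ : ℝ) (hσ₁ : σ₁ = Real.sin (θ₀ - lam)) (hσ₂ : σ₂ = Real.cos (θ₀ - lam))
    (hσ : 0 < σ₁ ∧ σ₁ < 1) :
    Tendsto (fun s => z s / s) atTop (𝓝 σ₁) ∧
    (∃ L : ℝ, 0 < L * σ₂ ∧
      Tendsto (fun s => Real.exp (-(σ₁ * s)) * y s) atTop (𝓝 L)) := by
  obtain ⟨hσ₁_pos, hσ₁_lt⟩ := hσ
  subst hμ hσ₁ hσ₂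
  have hθz : ∀ s, θ s = (θ₀ - lam) + lam * exp (-z s) := fun s => by
    have := Translator.theta_sub_mul_exp_neg_eq hz (fun t => by simpa using hθ t) s
    rw [hz0, hθ0, neg_zero, exp_zero, mul_one] at this
    linarith
  have hzs : Tendsto (fun s => z s / s) atTop (𝓝 (sin (θ₀ - lam))) := by
    have hsin := ((continuous_sin.tendsto _).comp hconv).congr fun s => (div_one (sin (θ s))).symm
    simpa using tendsto_div_atTop_of_tendsto_deriv_div hz hasDerivAt_id tendsto_id
      (Eventually.of_forall fun _ => one_pos) hsin
  obtain ⟨c, hc⟩ := Translator.exists_tendsto_sub_mul hσ₁_pos hz hθz hzs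
  refine ⟨hzs, _, ?_, tendsto_exp_neg_mul_mul_of_hasDerivAt hσ₁_pos hy hc
    ((continuous_cos.tendsto _).comp hconv)⟩
  have hcos_sq : 0 < cos (θ₀ - lam) ^ 2 := by
    nlinarith [sin_sq_add_cos_sq (θ₀ - lam)]
  calc 0 < exp c * cos (θ₀ - lam) ^ 2 / sin (θ₀ - lam) := by positivity
    _ = _ := by ring

theorem stmt16
    (lam μ θ₀ : ℝ) (y z θ : ℝ → ℝ)
    (hy0 : y 0 = 0) (hz0 : z 0 = 0) (hθ0 : θ 0 = θ₀)
    (hy : ∀ s : ℝ, HasDerivAt y (Real.exp (z s) * Real.cos (θ s)) s)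
    (hz : ∀ s : ℝ, HasDerivAt z (Real.sin (θ s)) s)
    (hθ : ∀ s : ℝ, HasDerivAt θ
      (-lam * Real.exp (-z s) * Real.sin (θ s) +
        μ * (Real.cos (θ s) - y s * Real.exp (-z s) * Real.sin (θ s))) s)
    (hμ : μ = 0) (hlam : lam ≠ 0)
    (hne : μ * Real.cos θ₀ - (θ₀ - θ₀ + lam) * Real.sin θ₀ ≠ 0)
    (hconv : Tendsto θ atTop (𝓝 (θ₀ - lam)))
    (σ₁ σ₂ : ℝ) (hσ₁ : σ₁ = Real.sin (θ₀ - lam)) (hσ₂ : σ₂ = Real.cos (θ₀ - lam))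
    (hσ : 0 < σ₁ ∧ σ₁ < 1) :
    Tendsto (fun s => z s / s) atTop (𝓝 σ₁) ∧
    (∃ L : ℝ, 0 < L * σ₂ ∧
      Tendsto (fun s => Real.exp (-(σ₁ * s)) * y s) atTop (𝓝 L)) :=
  stmt16_general lam μ θ₀ y z θ hz0 hθ0 hy hz hθ hμ hconv σ₁ σ₂ hσ₁ hσ₂ hσ
end
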